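/- arXiv:1905.09847 — 14 statements merged into one kernel-verified Lean document; each statement's English description precedes it below -/
import Mathlib

section
/- For one step of an s-stage Runge–Kutta method, the change in the squared norm satisfies the identity ‖u^{n+1}‖² − ‖uⁿ‖² = 2Δt Σ_{j=1}^s bⱼ ⟨yⱼ, fⱼ⟩ − 2Δt² Σ_{i,j=1}^s bᵢ aᵢⱼ ⟨fⱼ, fᵢ⟩ + Δt² Σ_{i,j=1}^s bᵢ bⱼ ⟨fᵢ, fⱼ⟩. -/
open scoped RealInnerProductSpace

/-- energy update identity for one Runge–Kutta step.
For one step of an `s`-stage Runge–Kutta method with coefficients `A`, weights `b`,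
step size `dt > 0`, starting value `u`, stage values `y i = u + dt ∑ j, A i j • f j`
and stage derivatives `f i`, the change of the squared norm satisfies
`‖u + dt ∑ b j • f j‖² − ‖u‖² = 2 dt ∑ b j ⟪y j, f j⟫ − 2 dt² ∑ᵢⱼ bᵢ aᵢⱼ ⟪fⱼ, fᵢ⟫
  + dt² ∑ᵢⱼ bᵢ bⱼ ⟪fᵢ, fⱼ⟫`. -/
theorem rk_energy_update
    {V : Type*} [NormedAddCommGroup V] [InnerProductSpace ℝ V]
    {s : ℕ} (A : Fin s → Fin s → ℝ) (b : Fin s → ℝ)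
    (dt : ℝ) (hdt : 0 < dt) (u : V) (y f : Fin s → V)
    (hy : ∀ i, y i = u + dt • ∑ j, A i j • f j) :
    ‖u + dt • ∑ j, b j • f j‖ ^ 2 - ‖u‖ ^ 2 =
      2 * dt * ∑ j, b j * ⟪y j, f j⟫
        - 2 * dt ^ 2 * ∑ i, ∑ j, b i * A i j * ⟪f j, f i⟫
        + dt ^ 2 * ∑ i, ∑ j, b i * b j * ⟪f i, f j⟫ := by
  set w : V := ∑ j, b j • f j with hw
  have hw2 : ⟪u, w⟫ = ∑ j, b j * ⟪u, f j⟫ := by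
    simp [hw, inner_sum, real_inner_smul_right]
  have hw3 : ⟪w, w⟫ = ∑ i, ∑ j, b i * b j * ⟪f i, f j⟫ := by
    rw [hw, sum_inner]
    refine Finset.sum_congr rfl fun i _ => ?_
    rw [real_inner_smul_left, inner_sum, Finset.mul_sum]
    exact Finset.sum_congr rfl fun j _ => by rw [real_inner_smul_right]; ring
  have h1 : ∑ j, b j * ⟪y j, f j⟫ =
      ∑ j, b j * ⟪u, f j⟫ + dt * ∑ i, ∑ j, b i * A i j * ⟪f j, f i⟫ := by
    simp only [hy, inner_add_left, real_inner_smul_left, sum_inner, mul_add,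
      Finset.mul_sum, Finset.sum_add_distrib]
    congr 1
    refine Finset.sum_congr rfl fun i _ => Finset.sum_congr rfl fun j _ => ?_
    ring
  rw [← real_inner_self_eq_norm_sq, ← real_inner_self_eq_norm_sq,
    real_inner_add_add_self, real_inner_smul_right, real_inner_smul_left,
    real_inner_smul_right, hw2, hw3, h1]
  ring
end

section
/- For one step of an s-stage Runge–Kutta method and any relaxation parameter γ ∈ ℝ, the relaxed update satisfies the identity ‖u_γ^{n+1}‖² − ‖uⁿ‖² = 2γΔt Σ_{j=1}^s bⱼ ⟨yⱼ, fⱼ⟩ − 2γΔt² Σ_{i,j=1}^s bᵢ aᵢⱼ ⟨fⱼ, fᵢ⟩ + γ²Δt² Σ_{i,j=1}^s bᵢ bⱼ ⟨fᵢ, fⱼ⟩. -/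
open scoped RealInnerProductSpace

/-- energy update identity for one relaxed Runge–Kutta step.
For one step of an `s`-stage Runge–Kutta method and any relaxation parameter `γ ∈ ℝ`,
the relaxed update `u + γ dt ∑ b j • f j` satisfies
`‖u_γ‖² − ‖u‖² = 2γ dt ∑ b j ⟪y j, f j⟫ − 2γ dt² ∑ᵢⱼ bᵢ aᵢⱼ ⟪fⱼ, fᵢ⟫
  + γ² dt² ∑ᵢⱼ bᵢ bⱼ ⟪fᵢ, fⱼ⟫`. -/
theorem rrk_energy_update
    {V : Type*} [NormedAddCommGroup V] [InnerProductSpace ℝ V]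
    {s : ℕ} (A : Fin s → Fin s → ℝ) (b : Fin s → ℝ)
    (dt : ℝ) (hdt : 0 < dt) (γ : ℝ) (u : V) (y f : Fin s → V)
    (hy : ∀ i, y i = u + dt • ∑ j, A i j • f j) :
    ‖u + (γ * dt) • ∑ j, b j • f j‖ ^ 2 - ‖u‖ ^ 2 =
      2 * γ * dt * ∑ j, b j * ⟪y j, f j⟫
        - 2 * γ * dt ^ 2 * ∑ i, ∑ j, b i * A i j * ⟪f j, f i⟫
        + γ ^ 2 * dt ^ 2 * ∑ i, ∑ j, b i * b j * ⟪f i, f j⟫ := by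
  have hu : ∀ i, ⟪u, f i⟫ = ⟪y i, f i⟫ - dt * ∑ j, A i j * ⟪f j, f i⟫ := by
    intro i
    rw [hy i]
    simp [inner_add_left, inner_smul_left, sum_inner, Finset.mul_sum]
  have hnorm : ‖u + (γ * dt) • ∑ j, b j • f j‖ ^ 2 =
      ‖u‖ ^ 2 + 2 * (γ * dt) * ⟪u, ∑ j, b j • f j⟫
        + (γ * dt) ^ 2 * ‖∑ j, b j • f j‖ ^ 2 := by
    rw [norm_add_sq_real, inner_smul_right, norm_smul, mul_pow,
      Real.norm_eq_abs, sq_abs]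
    ring
  have h1 : ⟪u, ∑ j, b j • f j⟫ = ∑ j, b j * ⟪y j, f j⟫
      - dt * ∑ i, ∑ j, b i * A i j * ⟪f j, f i⟫ := by
    simp only [inner_sum, inner_smul_right, hu, mul_sub, Finset.sum_sub_distrib,
      Finset.mul_sum]
    congr 1
    exact Finset.sum_congr rfl fun i _ => Finset.sum_congr rfl fun j _ => by ring
  have h2 : ‖∑ j, b j • f j‖ ^ 2 = ∑ i, ∑ j, b i * b j * ⟪f i, f j⟫ := by
    rw [← real_inner_self_eq_norm_sq, sum_inner]
    refine Finset.sum_congr rfl fun i _ => ?_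
    rw [real_inner_smul_left, inner_sum, Finset.mul_sum]
    refine Finset.sum_congr rfl fun j _ => ?_
    rw [real_inner_smul_right]
    ring
  rw [hnorm, h1, h2]
  ring
end

section
/- (Conservation part of Theorem 2.2.) If the stage values and stage derivatives of one Runge–Kutta step satisfy the conservation property ⟨yⱼ, fⱼ⟩ = 0 for every j = 1,…,s, then the relaxed update with relaxation parameter γₙ exactly conserves the norm: ‖u_{γₙ}^{n+1}‖ = ‖uⁿ‖. -/
open scoped RealInnerProductSpace
open Classical

/-- conservation part of Theorem 2.2.  If the stage values and stage
derivatives of one Runge–Kutta step satisfy the conservation property `⟪y j, f j⟫ = 0`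
for every `j`, then the relaxed update with relaxation parameter `γₙ` exactly conserves
the norm: `‖u_{γₙ}‖ = ‖u‖`. -/
theorem rrk_conservative
    {V : Type*} [NormedAddCommGroup V] [InnerProductSpace ℝ V]
    {s : ℕ} (A : Fin s → Fin s → ℝ) (b : Fin s → ℝ)
    (dt : ℝ) (hdt : 0 < dt) (u : V) (y f : Fin s → V)
    (hy : ∀ i, y i = u + dt • ∑ j, A i j • f j)
    (γn : ℝ)
    (hγn : γn = if (∑ j, b j • f j) = 0 then 1
      else (2 * ∑ i, ∑ j, b i * A i j * ⟪f i, f j⟫) / ∑ i, ∑ j, b i * b j * ⟪f i, f j⟫)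
    (hcons : ∀ j, ⟪y j, f j⟫ = 0) :
    ‖u + (γn * dt) • ∑ j, b j • f j‖ = ‖u‖ := by
  set F : V := ∑ j, b j • f j with hF
  by_cases h0 : F = 0
  · rw [h0]; simp
  · set S : ℝ := ∑ i, ∑ j, b i * A i j * ⟪f i, f j⟫ with hSdef
    set D : ℝ := ∑ i, ∑ j, b i * b j * ⟪f i, f j⟫ with hDdef
    have hγ : γn = 2 * S / D := by rw [hγn, if_neg h0]
    -- D = ⟪F, F⟫ = ‖F‖²
    have hD : D = ‖F‖ ^ 2 := by
      rw [hDdef, ← real_inner_self_eq_norm_sq, hF, sum_inner]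
      refine Finset.sum_congr rfl fun i _ => ?_
      rw [inner_sum]
      refine Finset.sum_congr rfl fun j _ => ?_
      rw [real_inner_smul_left, real_inner_smul_right]; ring
    have hDne : D ≠ 0 := by
      rw [hD]
      exact pow_ne_zero _ (norm_ne_zero_iff.mpr h0)
    -- inner product of u with each f j
    have huf : ∀ j, ⟪u, f j⟫ = -(dt * ∑ i, A j i * ⟪f i, f j⟫) := by
      intro j
      have h := hcons j
      rw [hy j, inner_add_left, real_inner_smul_left, sum_inner] at h
      have hs : (∑ i, ⟪A j i • f i, f j⟫) = ∑ i, A j i * ⟪f i, f j⟫ :=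
        Finset.sum_congr rfl fun i _ => real_inner_smul_left _ _ _
      rw [hs] at h
      linarith
    -- ⟪u, F⟫ = -dt * S
    have hterm : ∀ j, (∑ i, b j * A j i * ⟪f i, f j⟫) = b j * ∑ i, A j i * ⟪f i, f j⟫ := by
      intro j
      rw [Finset.mul_sum]
      exact Finset.sum_congr rfl fun i _ => mul_assoc _ _ _
    have hS' : S = ∑ j, ∑ i, b j * A j i * ⟪f i, f j⟫ := by
      rw [hSdef]
      refine Finset.sum_congr rfl fun j _ => Finset.sum_congr rfl fun i _ => ?_
      rw [real_inner_comm]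
    have huF : ⟪u, F⟫ = -(dt * S) := by
      rw [hF, inner_sum]
      have hr : (∑ j, ⟪u, b j • f j⟫) = ∑ j, b j * ⟪u, f j⟫ :=
        Finset.sum_congr rfl fun j _ => real_inner_smul_right _ _ _
      rw [hr]
      simp only [huf]
      rw [hS']
      simp only [hterm]
      rw [Finset.mul_sum, ← Finset.sum_neg_distrib]
      exact Finset.sum_congr rfl fun j _ => by ring
    have key : ‖u + (γn * dt) • F‖ ^ 2 = ‖u‖ ^ 2 := by
      rw [norm_add_sq_real, real_inner_smul_right, huF, norm_smul, mul_pow, Real.norm_eq_abs, sq_abs, ← hD, hγ]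
      field_simp
      ring
    calc ‖u + (γn * dt) • F‖ = Real.sqrt (‖u + (γn * dt) • F‖ ^ 2) :=
          (Real.sqrt_sq (norm_nonneg _)).symm
      _ = Real.sqrt (‖u‖ ^ 2) := by rw [key]
      _ = ‖u‖ := Real.sqrt_sq (norm_nonneg _)
end

section
/- (Monotonicity part of Theorem 2.2.) If the weights are nonnegative (bⱼ ≥ 0 for all j), the stage values and stage derivatives satisfy the dissipativity property ⟨yⱼ, fⱼ⟩ ≤ 0 for every j = 1,…,s, and the relaxation parameter satisfies γₙ ≥ 0, then the relaxed update is monotone: ‖u_{γₙ}^{n+1}‖ ≤ ‖uⁿ‖. -/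
open scoped RealInnerProductSpace
open Classical

/-- monotonicity part of Theorem 2.2.  If the weights are nonnegative,
the stage values and stage derivatives satisfy the dissipativity property
`⟪y j, f j⟫ ≤ 0` for every `j`, and the relaxation parameter satisfies `γₙ ≥ 0`, then
the relaxed update is monotone: `‖u_{γₙ}‖ ≤ ‖u‖`. -/
theorem rrk_monotone
    {V : Type*} [NormedAddCommGroup V] [InnerProductSpace ℝ V]
    {s : ℕ} (A : Fin s → Fin s → ℝ) (b : Fin s → ℝ)
    (dt : ℝ) (hdt : 0 < dt) (u : V) (y f : Fin s → V)
    (hy : ∀ i, y i = u + dt • ∑ j, A i j • f j)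
    (γn : ℝ)
    (hγn : γn = if (∑ j, b j • f j) = 0 then 1
      else (2 * ∑ i, ∑ j, b i * A i j * ⟪f i, f j⟫) / ∑ i, ∑ j, b i * b j * ⟪f i, f j⟫)
    (hb : ∀ j, 0 ≤ b j)
    (hdiss : ∀ j, ⟪y j, f j⟫ ≤ 0)
    (hγpos : 0 ≤ γn) :
    ‖u + (γn * dt) • ∑ j, b j • f j‖ ≤ ‖u‖ := by
  by_cases h0 : (∑ j, b j • f j) = 0
  · simp [h0]
  · set F : V := ∑ j, b j • f j with hFdef
    set S : ℝ := ∑ i, ∑ j, b i * A i j * ⟪f i, f j⟫ with hSdef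
    set B : ℝ := ∑ i, ∑ j, b i * b j * ⟪f i, f j⟫ with hBdef
    have hB : ⟪F, F⟫ = B := by
      simp only [hFdef, hBdef, sum_inner, inner_sum, real_inner_smul_left,
        real_inner_smul_right]
      apply Finset.sum_congr rfl; intro i _
      apply Finset.sum_congr rfl; intro j _
      rw [real_inner_comm (f j) (f i)]; ring
    have hBpos : 0 < B := by
      rw [← hB, real_inner_self_eq_norm_sq]
      exact pow_pos (norm_pos_iff.2 h0) 2
    have hγ : γn * B = 2 * S := by
      rw [hγn, if_neg h0]
      field_simp
    -- expand dissipativity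
    have expand : ∀ i, b i * ⟪y i, f i⟫
        = b i * ⟪u, f i⟫ + dt * ∑ j, b i * A i j * ⟪f i, f j⟫ := by
      intro i
      rw [hy i]
      rw [inner_add_left, real_inner_smul_left, sum_inner]
      simp only [real_inner_smul_left]
      rw [mul_add]
      congr 1
      simp only [Finset.mul_sum]
      apply Finset.sum_congr rfl; intro j _
      rw [real_inner_comm (f j) (f i)]
      ring
    have hsum : ∑ i, (b i * ⟪u, f i⟫ + dt * ∑ j, b i * A i j * ⟪f i, f j⟫) ≤ 0 := by
      calc ∑ i, (b i * ⟪u, f i⟫ + dt * ∑ j, b i * A i j * ⟪f i, f j⟫)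
          = ∑ i, b i * ⟪y i, f i⟫ := by
            apply Finset.sum_congr rfl; intro i _; rw [expand i]
        _ ≤ 0 := Finset.sum_nonpos fun i _ =>
            mul_nonpos_of_nonneg_of_nonpos (hb i) (hdiss i)
    have huF : ⟪u, F⟫ + dt * S ≤ 0 := by
      have h1 : ⟪u, F⟫ = ∑ i, b i * ⟪u, f i⟫ := by
        simp [hFdef, inner_sum, real_inner_smul_right]
      rw [h1]
      rw [Finset.sum_add_distrib] at hsum
      have h2 : ∑ i, dt * ∑ j, b i * A i j * ⟪f i, f j⟫ = dt * S := by
        rw [hSdef, Finset.mul_sum]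
      linarith
    set c : ℝ := γn * dt with hcdef
    have hc : 0 ≤ c := mul_nonneg hγpos hdt.le
    have hsq : ‖u + c • F‖ ^ 2 = ‖u‖ ^ 2 + 2 * (c * ⟪u, F⟫) + c ^ 2 * B := by
      have hFn : ‖F‖ ^ 2 = B := by rw [← real_inner_self_eq_norm_sq]; exact hB
      rw [@norm_add_sq_real, real_inner_smul_right, norm_smul,
        mul_pow, Real.norm_eq_abs, sq_abs, hFn]
    have hle : ‖u + c • F‖ ^ 2 ≤ ‖u‖ ^ 2 := by
      rw [hsq]
      have h2 : c * ⟪u, F⟫ ≤ c * (-(dt * S)) := mul_le_mul_of_nonneg_left (by linarith) hc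
      have h3 : c ^ 2 * B = γn * dt ^ 2 * (2 * S) := by
        rw [hcdef]; rw [← hγ]; ring
      have h4 : 2 * (c * (-(dt * S))) + c ^ 2 * B = 0 := by
        rw [h3, hcdef]; ring
      linarith
    have := norm_nonneg (u + c • F)
    nlinarith [norm_nonneg u]
end

section
/- (Lemma 2.1.) Suppose the explicit Runge–Kutta coefficients satisfy Σ_{i,j=1}^s bᵢ aᵢⱼ > 0, the function f is continuous, and f(t₀, u₀) ≠ 0. Then there exists δ > 0 such that for every step size Δt ∈ (0, δ), the relaxation parameter is positive: γ(Δt) > 0. -/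
open scoped RealInnerProductSpace
open Classical

/-- The relaxation parameter of one explicit Runge–Kutta step, as a function of the
step size, given the stage derivatives `F` (depending on the step size):
`γ(dt) = 1` if `∑ⱼ bⱼ fⱼ = 0`, and otherwise
`γ(dt) = 2 ∑ᵢⱼ bᵢ aᵢⱼ ⟪fᵢ, fⱼ⟫ / ‖∑ⱼ bⱼ fⱼ‖²`. -/
noncomputable def RKGamma {s m : ℕ} (A : Fin s → Fin s → ℝ) (b : Fin s → ℝ)
    (F : ℝ → Fin s → EuclideanSpace ℝ (Fin m)) (dt : ℝ) : ℝ :=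
  if (∑ j, b j • F dt j) = 0 then 1
  else (2 * ∑ i, ∑ j, b i * A i j * ⟪F dt i, F dt j⟫) / ‖∑ j, b j • F dt j‖ ^ 2

/-- Lemma 2.1.  Suppose the explicit Runge–Kutta coefficients satisfy
`∑ᵢⱼ bᵢ aᵢⱼ > 0`, the right-hand side `f` is continuous, and `f(t₀, u₀) ≠ 0`.  Then
there exists `δ > 0` such that for every step size `dt ∈ (0, δ)` the relaxation
parameter is positive: `γ(dt) > 0`.  Here `F dt i = f(t₀ + cᵢ dt, yᵢ)` are the stage
derivatives of one explicit step of size `dt` from `(t₀, u₀)`, with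
`cᵢ = ∑ⱼ aᵢⱼ` and `yᵢ = u₀ + dt ∑ⱼ aᵢⱼ • F dt j`. -/
theorem rrk_gamma_pos
    {s m : ℕ} (A : Fin s → Fin s → ℝ) (b : Fin s → ℝ)
    (hA : ∀ i j : Fin s, (i : ℕ) ≤ (j : ℕ) → A i j = 0)
    (hbA : 0 < ∑ i, ∑ j, b i * A i j)
    (f : ℝ → EuclideanSpace ℝ (Fin m) → EuclideanSpace ℝ (Fin m))
    (hf : Continuous (Function.uncurry f))
    (t₀ : ℝ) (u₀ : EuclideanSpace ℝ (Fin m))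
    (hf0 : f t₀ u₀ ≠ 0)
    (F : ℝ → Fin s → EuclideanSpace ℝ (Fin m))
    (hF : ∀ dt i, F dt i =
      f (t₀ + (∑ j, A i j) * dt) (u₀ + dt • ∑ j, A i j • F dt j)) :
    ∃ δ : ℝ, 0 < δ ∧ ∀ dt ∈ Set.Ioo (0 : ℝ) δ, 0 < RKGamma A b F dt := by
  set L := f t₀ u₀ with hL
  -- Each stage derivative tends to f t₀ u₀ as dt → 0
  have key : ∀ n : ℕ, ∀ i : Fin s, (i : ℕ) = n →
      Filter.Tendsto (fun dt => F dt i) (nhds 0) (nhds L) := by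
    intro n
    induction n using Nat.strong_induction_on with
    | _ n IH =>
      intro i hi
      have hsum : Filter.Tendsto (fun dt => ∑ j, A i j • F dt j) (nhds 0)
          (nhds (∑ j, A i j • L)) := by
        apply tendsto_finset_sum
        intro j _
        by_cases hij : (i : ℕ) ≤ (j : ℕ)
        · simp [hA i j hij]
        · push_neg at hij
          have := IH (j : ℕ) (by omega) j rfl
          exact this.const_smul _
      have harg : Filter.Tendsto
          (fun dt : ℝ => (t₀ + (∑ j, A i j) * dt, u₀ + dt • ∑ j, A i j • F dt j))
          (nhds 0) (nhds (t₀, u₀)) := by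
        apply Filter.Tendsto.prodMk_nhds
        · have : Filter.Tendsto (fun dt : ℝ => t₀ + (∑ j, A i j) * dt) (nhds 0)
              (nhds (t₀ + (∑ j, A i j) * 0)) := by
            exact (tendsto_const_nhds.add (tendsto_const_nhds.mul Filter.tendsto_id))
          simpa using this
        · have : Filter.Tendsto (fun dt : ℝ => u₀ + dt • ∑ j, A i j • F dt j) (nhds 0)
              (nhds (u₀ + (0:ℝ) • ∑ j, A i j • L)) :=
            tendsto_const_nhds.add (Filter.Tendsto.smul Filter.tendsto_id hsum)
          simpa using this
      have := (hf.tendsto (t₀, u₀)).comp harg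
      have heq : (fun dt => F dt i) =
          (Function.uncurry f) ∘
            (fun dt : ℝ => (t₀ + (∑ j, A i j) * dt, u₀ + dt • ∑ j, A i j • F dt j)) := by
        funext dt; exact hF dt i
      rw [heq]; exact this
  have keyF : ∀ i : Fin s, Filter.Tendsto (fun dt => F dt i) (nhds 0) (nhds L) :=
    fun i => key (i : ℕ) i rfl
  -- The numerator tends to a positive limit
  have hnum : Filter.Tendsto
      (fun dt => ∑ i, ∑ j, b i * A i j * ⟪F dt i, F dt j⟫) (nhds 0)
      (nhds (∑ i, ∑ j, b i * A i j * ⟪L, L⟫)) := by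
    apply tendsto_finset_sum; intro i _
    apply tendsto_finset_sum; intro j _
    exact tendsto_const_nhds.mul (((keyF i).inner (keyF j)))
  have hLpos : (0:ℝ) < ⟪L, L⟫ := by rw [real_inner_self_eq_norm_sq]; exact pow_pos (norm_pos_iff.mpr hf0) 2
  have hlim : (0:ℝ) < ∑ i, ∑ j, b i * A i j * ⟪L, L⟫ := by
    have : (∑ i, ∑ j, b i * A i j * ⟪L, L⟫) = (∑ i, ∑ j, b i * A i j) * ⟪L, L⟫ := by
      rw [Finset.sum_mul]
      congr 1; funext i
      rw [Finset.sum_mul]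
    rw [this]
    exact mul_pos hbA hLpos
  have hev : ∀ᶠ dt in nhds (0:ℝ),
      0 < ∑ i, ∑ j, b i * A i j * ⟪F dt i, F dt j⟫ :=
    hnum.eventually (eventually_gt_nhds hlim)
  rw [Metric.eventually_nhds_iff] at hev
  obtain ⟨δ, hδ, hδ'⟩ := hev
  refine ⟨δ, hδ, fun dt hdt => ?_⟩
  have hpos : 0 < ∑ i, ∑ j, b i * A i j * ⟪F dt i, F dt j⟫ := by
    apply hδ'
    simp only [dist_zero_right, Real.norm_eq_abs]
    rw [abs_of_pos hdt.1]; exact hdt.2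
  unfold RKGamma
  split_ifs with h
  · norm_num
  · apply div_pos (by linarith)
    have : 0 < ‖∑ j, b j • F dt j‖ := norm_pos_iff.mpr h
    positivity
end

section
/- (Lemma 2.5.) Let (A, b) be an explicit s-stage Runge–Kutta method of order p (in the sense that for every C^∞ right-hand side the one-step local error is O(Δt^{p+1})), with p ≥ 2. Let f be C^∞ with f(t₀, u₀) ≠ 0, and let γ(Δt) be the relaxation parameter for one step from (t₀, u₀). Then γ(Δt) = 1 + O(Δt^{p−1}); i.e., there exist C, δ > 0 such that |γ(Δt) − 1| ≤ C Δt^{p−1} for all Δt ∈ (0, δ). -/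
open scoped RealInnerProductSpace
open Classical

/-- An explicit Runge–Kutta method `(A, b)` has order `p` if for every `C^∞` right-hand
side, every initial condition, and every local solution of the IVP, the one-step local
error is `O(dt^(p+1))`.  Here `F dt i` denotes the stage derivatives
`F dt i = f(t₀ + cᵢ dt, u₀ + dt ∑ⱼ aᵢⱼ F dt j)` with `cᵢ = ∑ⱼ aᵢⱼ`, and the update is
`u¹(dt) = u₀ + dt ∑ⱼ bⱼ F dt j`. -/
def RKHasOrder {s : ℕ} (A : Fin s → Fin s → ℝ) (b : Fin s → ℝ) (p : ℕ) : Prop :=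
  ∀ (m : ℕ) (f : ℝ → EuclideanSpace ℝ (Fin m) → EuclideanSpace ℝ (Fin m)),
    ContDiff ℝ (⊤ : ℕ∞) (Function.uncurry f) →
    ∀ (t₀ : ℝ) (u₀ : EuclideanSpace ℝ (Fin m)) (F : ℝ → Fin s → EuclideanSpace ℝ (Fin m)),
      (∀ dt i, F dt i =
        f (t₀ + (∑ j, A i j) * dt) (u₀ + dt • ∑ j, A i j • F dt j)) →
      ∀ (u : ℝ → EuclideanSpace ℝ (Fin m)) (ε : ℝ), 0 < ε →
        (∀ t ∈ Set.Ioo (t₀ - ε) (t₀ + ε), HasDerivAt u (f t (u t)) t) →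
        u t₀ = u₀ →
        ∃ C δ : ℝ, 0 < C ∧ 0 < δ ∧
          ∀ dt ∈ Set.Ioo (0 : ℝ) δ,
            ‖u₀ + dt • ∑ j, b j • F dt j - u (t₀ + dt)‖ ≤ C * dt ^ (p + 1)

noncomputable section RRKAux

open Set

/-- `Fin.snoc` as a continuous linear map into Euclidean space. -/
def snocCLM (m : ℕ) : (EuclideanSpace ℝ (Fin m) × ℝ) →L[ℝ] EuclideanSpace ℝ (Fin (m+1)) :=
  LinearMap.toContinuousLinearMap
  { toFun := fun p => WithLp.toLp 2 (Fin.snoc p.1 p.2 : Fin (m+1) → ℝ)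
    map_add' := by
      intro a b
      ext k
      induction k using Fin.lastCases with
      | last => simp [Fin.snoc_last]
      | cast i => simp [Fin.snoc_castSucc]
    map_smul' := by
      intro c a
      ext k
      induction k using Fin.lastCases with
      | last => simp [Fin.snoc_last]
      | cast i => simp [Fin.snoc_castSucc] }

/-- Truncation (dropping the last coordinate) as a continuous linear map. -/
def truncCLM (m : ℕ) : EuclideanSpace ℝ (Fin (m+1)) →L[ℝ] EuclideanSpace ℝ (Fin m) :=
  LinearMap.toContinuousLinearMap
  { toFun := fun x => WithLp.toLp 2 (fun i => x (Fin.castSucc i) : Fin m → ℝ)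
    map_add' := by intro a b; ext i; rfl
    map_smul' := by intro c a; ext i; rfl }

lemma trunc_snoc {m : ℕ} (a : EuclideanSpace ℝ (Fin m)) (c : ℝ) :
    truncCLM m (snocCLM m (a, c)) = a := by
  ext i
  show (Fin.snoc a c : Fin (m+1) → ℝ) (Fin.castSucc i) = a i
  simp

lemma last_snoc {m : ℕ} (a : EuclideanSpace ℝ (Fin m)) (c : ℝ) :
    EuclideanSpace.proj (Fin.last m) (snocCLM m (a, c)) = c := by
  show (Fin.snoc a c : Fin (m+1) → ℝ) (Fin.last m) = c
  simp

lemma abs_proj_le_norm {m : ℕ} (x : EuclideanSpace ℝ (Fin (m+1))) (k : Fin (m+1)) :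
    |x k| ≤ ‖x‖ := by
  rw [EuclideanSpace.norm_eq]
  rw [← Real.sqrt_sq (abs_nonneg (x k))]
  apply Real.sqrt_le_sqrt
  rw [sq_abs]
  calc x k ^ 2 = ‖x k‖ ^ 2 := by rw [Real.norm_eq_abs, sq_abs]
  _ ≤ ∑ i, ‖x i‖ ^ 2 :=
    Finset.single_le_sum (f := fun i => ‖x i‖ ^ 2) (fun i _ => sq_nonneg _)
      (Finset.mem_univ k)

/-- Local existence of solutions for time-dependent smooth ODEs, via time augmentation. -/
lemma exists_local_solution {m : ℕ}
    (f : ℝ → EuclideanSpace ℝ (Fin m) → EuclideanSpace ℝ (Fin m))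
    (hf : ContDiff ℝ (⊤ : ℕ∞) (Function.uncurry f)) (t₀ : ℝ) (u₀ : EuclideanSpace ℝ (Fin m)) :
    ∃ u : ℝ → EuclideanSpace ℝ (Fin m), u t₀ = u₀ ∧ ∃ ε > (0:ℝ),
      ∀ t ∈ Ioo (t₀ - ε) (t₀ + ε), HasDerivAt u (f t (u t)) t := by
  have hV1 : ContDiff ℝ 1 (fun q : ℝ × EuclideanSpace ℝ (Fin m) =>
      ((1 : ℝ), Function.uncurry f q)) :=
    contDiff_const.prodMk (hf.of_le (by simp))
  obtain ⟨h, hh0, ε, hε, hderiv⟩ :=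
    (hV1.contDiffAt (x := ((t₀, u₀) : ℝ × EuclideanSpace ℝ (Fin m)))).exists_forall_mem_closedBall_exists_eq_forall_mem_Ioo_hasDerivAt₀ t₀
  have hfst : ∀ t ∈ Ioo (t₀ - ε) (t₀ + ε), (h t).1 = t := by
    intro t ht
    have hφ : ∀ r ∈ Ioo (t₀ - ε) (t₀ + ε),
        HasDerivAt (fun r => (h r).1 - r) 0 r := by
      intro r hr
      have h1 : HasDerivAt (fun r => (h r).1) 1 r :=
        ((ContinuousLinearMap.fst ℝ ℝ (EuclideanSpace ℝ (Fin m))).hasFDerivAt).comp_hasDerivAt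
          r (hderiv r hr)
      have h2 := h1.sub (hasDerivAt_id' r); rw [sub_self] at h2; exact h2
    have hconst : (fun r => (h r).1 - r) t = (fun r => (h r).1 - r) t₀ := by
      have ht₀ : t₀ ∈ Ioo (t₀ - ε) (t₀ + ε) := by constructor <;> linarith
      apply (convex_Ioo _ _).is_const_of_fderivWithin_eq_zero
        (fun r hr => ((hφ r hr).differentiableAt).differentiableWithinAt)
        (fun r hr => ?_) ht ht₀
      rw [((hφ r hr).hasFDerivAt.hasFDerivWithinAt).fderivWithin
        ((isOpen_Ioo.uniqueDiffOn) r hr)]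
      ext1
      simp
    have : (h t₀).1 = t₀ := by rw [hh0]
    simp only at hconst
    rw [this] at hconst
    linarith [hconst]
  refine ⟨fun t => (h t).2, by simp [hh0], ε, hε, fun t ht => ?_⟩
  have h2 : HasDerivAt (fun t => (h t).2) (Function.uncurry f (h t)) t :=
    ((ContinuousLinearMap.snd ℝ ℝ (EuclideanSpace ℝ (Fin m))).hasFDerivAt).comp_hasDerivAt
      t (hderiv t ht)
  have : Function.uncurry f (h t) = f t (h t).2 := by
    rw [Function.uncurry, hfst t ht]
  rwa [this] at h2

/-- A method of order `p ≥ 1` has `∑ b = 1`. -/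
lemma rk_sum_b_eq_one {s p : ℕ} {A : Fin s → Fin s → ℝ} {b : Fin s → ℝ}
    (horder : RKHasOrder A b p) (hp : 1 ≤ p) : ∑ j, b j = 1 := by
  set c : EuclideanSpace ℝ (Fin 1) := EuclideanSpace.single 0 1 with hc
  have hcnorm : ‖c‖ = 1 := by simp [hc]
  have hu : ∀ t ∈ Ioo ((0:ℝ) - 1) ((0:ℝ) + 1),
      HasDerivAt (fun t : ℝ => t • c) ((fun _ _ => c) t (t • c)) t := by
    intro t _
    simpa using (hasDerivAt_id t).smul_const c
  obtain ⟨C, δ, hC, hδ, hbound⟩ :=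
    horder 1 (fun _ _ => c) contDiff_const 0 0 (fun _ _ => c)
      (fun _ _ => rfl) (fun t => t • c) 1 one_pos hu (by simp)
  have key : ∀ dt ∈ Ioo (0:ℝ) δ, |∑ j, b j - 1| ≤ C * dt ^ p := by
    intro dt hdt
    have h1 := hbound dt hdt
    have h2 : (0 : EuclideanSpace ℝ (Fin 1)) + dt • ∑ j, b j • c - ((0:ℝ) + dt) • c
        = (dt * (∑ j, b j - 1)) • c := by
      rw [← Finset.sum_smul]
      module
    rw [h2, norm_smul] at h1
    simp only [Real.norm_eq_abs, hcnorm, mul_one, abs_mul,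
      abs_of_pos hdt.1] at h1
    have hdtpow : dt ^ (p + 1) = dt * dt ^ p := by ring
    rw [hdtpow, ← mul_assoc, mul_comm C dt, mul_assoc] at h1
    exact le_of_mul_le_mul_left h1 hdt.1
  by_contra hne
  have hd : 0 < |∑ j, b j - 1| := abs_pos.mpr (sub_ne_zero.mpr hne)
  have htend : Filter.Tendsto (fun dt : ℝ => C * dt ^ p)
      (nhdsWithin 0 (Ioi 0)) (nhds 0) := by
    have : Filter.Tendsto (fun dt : ℝ => C * dt ^ p) (nhds 0) (nhds (C * 0 ^ p)) :=
      (continuous_const.mul (continuous_pow p)).tendsto 0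
    rw [zero_pow (by omega), mul_zero] at this
    exact this.mono_left nhdsWithin_le_nhds
  have hev : ∀ᶠ dt in nhdsWithin (0:ℝ) (Ioi 0), |∑ j, b j - 1| ≤ C * dt ^ p := by
    filter_upwards [Ioo_mem_nhdsGT_of_mem
      (by constructor <;> simp [hδ] : (0:ℝ) ∈ Ico 0 δ)] with dt hdt using key dt hdt
  have : |∑ j, b j - 1| ≤ 0 := ge_of_tendsto htend hev
  linarith

/-- The stage derivatives of an explicit RK method depend continuously on the step size. -/
lemma rk_stages_continuous {s m : ℕ} {A : Fin s → Fin s → ℝ}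
    (hA : ∀ i j : Fin s, (i : ℕ) ≤ (j : ℕ) → A i j = 0)
    {f : ℝ → EuclideanSpace ℝ (Fin m) → EuclideanSpace ℝ (Fin m)}
    (hf : Continuous (Function.uncurry f))
    (t₀ : ℝ) (u₀ : EuclideanSpace ℝ (Fin m))
    {F : ℝ → Fin s → EuclideanSpace ℝ (Fin m)}
    (hF : ∀ dt i, F dt i =
      f (t₀ + (∑ j, A i j) * dt) (u₀ + dt • ∑ j, A i j • F dt j)) :
    ∀ i : Fin s, Continuous (fun dt => F dt i) := by
  have hsum : ∀ (dt : ℝ) (i : Fin s),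
      (∑ j, A i j • F dt j) = ∑ j, (if j.val < i.val then A i j • F dt j else 0) := by
    intro dt i
    apply Finset.sum_congr rfl
    intro j _
    by_cases h : j.val < i.val
    · simp [h]
    · rw [hA i j (le_of_not_gt h)]
      simp [h]
  have key : ∀ n : ℕ, ∀ i : Fin s, (i:ℕ) < n → Continuous (fun dt => F dt i) := by
    intro n
    induction n with
    | zero => intro i hi; omega
    | succ n ih =>
      intro i _hi
      have heq : (fun dt => F dt i) = fun dt =>
          Function.uncurry f (t₀ + (∑ j, A i j) * dt,
            u₀ + dt • ∑ j, (if j.val < i.val then A i j • F dt j else 0)) := by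
        funext dt
        rw [hF dt i, hsum dt i]
        rfl
      rw [heq]
      have hcont_sum : Continuous fun dt =>
          ∑ j, (if j.val < i.val then A i j • F dt j else 0) := by
        apply continuous_finset_sum
        intro j _
        by_cases h : j.val < i.val
        · simp only [if_pos h]
          by_cases hj : (j:ℕ) < n
          · exact (ih j hj).const_smul (A i j)
          · -- j < i ≤ n so j < n ; contradiction otherwise
            exact absurd (by omega : (j:ℕ) < n) hj
        · simp only [if_neg h]
          exact continuous_const
      exact hf.comp ((continuous_const.add (continuous_const.mul continuous_id)).prodMk
        (continuous_const.add (continuous_id.smul hcont_sum)))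
  intro i
  exact key s i i.2

end RRKAux

/-- Lemma 2.5.  Let `(A, b)` be an explicit `s`-stage Runge–Kutta
method of order `p ≥ 2`, let `f` be `C^∞` with `f(t₀, u₀) ≠ 0`, and let `γ(dt)` be the
relaxation parameter for one step from `(t₀, u₀)`.  Then `γ(dt) = 1 + O(dt^(p−1))`:
there exist `C, δ > 0` such that `|γ(dt) − 1| ≤ C dt^(p−1)` for all `dt ∈ (0, δ)`. -/
theorem rrk_gamma_near_one
    {s m p : ℕ} (A : Fin s → Fin s → ℝ) (b : Fin s → ℝ)
    (hA : ∀ i j : Fin s, (i : ℕ) ≤ (j : ℕ) → A i j = 0)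
    (hp : 2 ≤ p)
    (horder : RKHasOrder A b p)
    (f : ℝ → EuclideanSpace ℝ (Fin m) → EuclideanSpace ℝ (Fin m))
    (hf : ContDiff ℝ (⊤ : ℕ∞) (Function.uncurry f))
    (t₀ : ℝ) (u₀ : EuclideanSpace ℝ (Fin m))
    (hf0 : f t₀ u₀ ≠ 0)
    (F : ℝ → Fin s → EuclideanSpace ℝ (Fin m))
    (hF : ∀ dt i, F dt i =
      f (t₀ + (∑ j, A i j) * dt) (u₀ + dt • ∑ j, A i j • F dt j)) :
    ∃ C δ : ℝ, 0 < C ∧ 0 < δ ∧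
      ∀ dt ∈ Set.Ioo (0 : ℝ) δ, |RKGamma A b F dt - 1| ≤ C * dt ^ (p - 1) := by
  classical
  set S : ℝ → EuclideanSpace ℝ (Fin m) := fun dt => ∑ j, b j • F dt j with hS
  set Q : ℝ → ℝ := fun dt => ∑ i, ∑ j, b i * A i j * ⟪F dt i, F dt j⟫ with hQ
  set Y : ℝ → Fin s → EuclideanSpace ℝ (Fin m) :=
    fun dt i => u₀ + dt • ∑ j, A i j • F dt j with hY
  have hSdt : ∀ dt, (∑ j, b j • F dt j) = S dt := fun _ => rfl
  have hF0 : ∀ i, F 0 i = f t₀ u₀ := by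
    intro i
    have h := hF 0 i
    simpa using h
  have hFcont := rk_stages_continuous hA hf.continuous t₀ u₀ hF
  have hScont : Continuous S := by
    rw [hS]; exact continuous_finset_sum _ (fun j _ => (hFcont j).const_smul (b j))
  have hsumb : ∑ j, b j = 1 := rk_sum_b_eq_one horder (by omega)
  have hS0 : S 0 = f t₀ u₀ := by
    calc S 0 = ∑ j, b j • F 0 j := rfl
      _ = ∑ j, b j • f t₀ u₀ := by
          apply Finset.sum_congr rfl; intro j _; rw [hF0 j]
      _ = (∑ j, b j) • f t₀ u₀ := by rw [Finset.sum_smul]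
      _ = f t₀ u₀ := by rw [hsumb, one_smul]
  set a : ℝ := ‖f t₀ u₀‖ with ha
  have ha0 : 0 < a := norm_pos_iff.mpr hf0
  obtain ⟨u, hu0, ε, hε, hu⟩ := exists_local_solution f hf t₀ u₀
  set g : ℝ → EuclideanSpace ℝ (Fin (m+1)) → EuclideanSpace ℝ (Fin (m+1)) :=
    fun t w => snocCLM m (f t (truncCLM m w),
      2 * ⟪truncCLM m w, f t (truncCLM m w)⟫) with hg
  have hgsmooth : ContDiff ℝ (⊤ : ℕ∞) (Function.uncurry g) := by
    have h2 : ContDiff ℝ (⊤ : ℕ∞) (fun q : ℝ × EuclideanSpace ℝ (Fin (m+1)) =>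
        truncCLM m q.2) := (truncCLM m).contDiff.comp contDiff_snd
    have h1 : ContDiff ℝ (⊤ : ℕ∞) (fun q : ℝ × EuclideanSpace ℝ (Fin (m+1)) =>
        f q.1 (truncCLM m q.2)) := hf.comp (contDiff_fst.prodMk h2)
    have h3 := ContDiff.inner ℝ h2 h1
    exact (snocCLM m).contDiff.comp (h1.prodMk (contDiff_const.mul h3))
  set w₀ : EuclideanSpace ℝ (Fin (m+1)) := snocCLM m (u₀, ⟪u₀, u₀⟫) with hw₀
  set G : ℝ → Fin s → EuclideanSpace ℝ (Fin (m+1)) :=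
    fun dt i => snocCLM m (F dt i, 2 * ⟪Y dt i, F dt i⟫) with hGdef
  have hG : ∀ dt i, G dt i =
      g (t₀ + (∑ j, A i j) * dt) (w₀ + dt • ∑ j, A i j • G dt j) := by
    intro dt i
    have hπ : truncCLM m (w₀ + dt • ∑ j, A i j • G dt j) = Y dt i := by
      rw [map_add, map_smul, map_sum]
      simp only [hGdef, map_smul, trunc_snoc, hw₀]
      rfl
    rw [hg]
    simp only
    rw [hπ, ← hF dt i]
  set w : ℝ → EuclideanSpace ℝ (Fin (m+1)) :=
    fun t => snocCLM m (u t, ⟪u t, u t⟫) with hwdef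
  have hw0 : w t₀ = w₀ := by rw [hwdef]; simp only; rw [hu0]
  have hw : ∀ t ∈ Set.Ioo (t₀ - ε) (t₀ + ε), HasDerivAt w (g t (w t)) t := by
    intro t ht
    have hut := hu t ht
    have hI := HasDerivAt.inner ℝ hut hut
    have hpair := hut.prodMk hI
    have hcomp := (snocCLM m).hasFDerivAt.comp_hasDerivAt t hpair
    have hgt : g t (w t) = snocCLM m
        (f t (u t), ⟪u t, f t (u t)⟫ + ⟪f t (u t), u t⟫) := by
      rw [hg]
      simp only
      rw [hwdef]
      simp only [trunc_snoc]
      congr 1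
      rw [real_inner_comm (f t (u t)) (u t)]
      ring_nf
    rw [hgt]
    exact hcomp
  obtain ⟨C₁, δ₁, hC₁, hδ₁, hb₁⟩ := horder m f hf t₀ u₀ F hF u ε hε hu hu0
  obtain ⟨C₂, δ₂, hC₂, hδ₂, hb₂⟩ := horder (m+1) g hgsmooth t₀ w₀ G hG w ε hε hw hw0
  have hnS : ContinuousAt (fun dt => ‖S dt‖) 0 := (hScont.norm).continuousAt
  obtain ⟨δ₃, hδ₃, h3⟩ := Metric.continuousAt_iff.mp hnS (min 1 (a/2)) (by positivity)
  have hucont : ContinuousAt u t₀ :=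
    (hu t₀ ⟨by linarith, by linarith⟩).continuousAt
  obtain ⟨δ₄, hδ₄, h4⟩ := Metric.continuousAt_iff.mp hucont 1 one_pos
  set M : ℝ := 2 * ‖u₀‖ + a + 2 with hM
  have hM0 : 0 < M := by positivity
  refine ⟨(C₁ * M + C₂) / (a ^ 2 / 4), min (min δ₁ δ₂) (min (min δ₃ δ₄) 1),
    by positivity, by positivity, ?_⟩
  intro dt hdt
  have hdt0 : 0 < dt := hdt.1
  have hdt1 : dt < δ₁ :=
    lt_of_lt_of_le hdt.2 ((min_le_left _ _).trans (min_le_left _ _))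
  have hdt2 : dt < δ₂ :=
    lt_of_lt_of_le hdt.2 ((min_le_left _ _).trans (min_le_right _ _))
  have hdt3 : dt < δ₃ :=
    lt_of_lt_of_le hdt.2 ((min_le_right _ _).trans ((min_le_left _ _).trans (min_le_left _ _)))
  have hdt4 : dt < δ₄ :=
    lt_of_lt_of_le hdt.2 ((min_le_right _ _).trans ((min_le_left _ _).trans (min_le_right _ _)))
  have hdt5 : dt < 1 :=
    lt_of_lt_of_le hdt.2 ((min_le_right _ _).trans (min_le_right _ _))
  -- bounds from continuity
  have hSd : |‖S dt‖ - a| < min 1 (a/2) := by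
    have h := h3 (x := dt) (by rw [Real.dist_eq, sub_zero, abs_of_pos hdt0]; exact hdt3)
    rw [Real.dist_eq, hS0, ← ha] at h
    exact h
  have hSub : ‖S dt‖ ≤ a + 1 := by
    have := (abs_lt.mp (lt_of_lt_of_le hSd (min_le_left _ _))).2
    linarith
  have hSlb : a / 2 < ‖S dt‖ := by
    have := (abs_lt.mp (lt_of_lt_of_le hSd (min_le_right _ _))).1
    linarith
  have hSne : S dt ≠ 0 := by
    intro h0
    rw [h0, norm_zero] at hSlb
    linarith
  have hSpos : 0 < ‖S dt‖ := by linarith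
  have hSsq : 0 < ‖S dt‖ ^ 2 := pow_pos hSpos 2
  have hub : ‖u (t₀ + dt) - u₀‖ < 1 := by
    have h := h4 (x := t₀ + dt)
      (by rw [Real.dist_eq, add_sub_cancel_left, abs_of_pos hdt0]; exact hdt4)
    rwa [dist_eq_norm, hu0] at h
  have hunorm : ‖u (t₀ + dt)‖ ≤ ‖u₀‖ + 1 := by
    have := norm_sub_norm_le (u (t₀ + dt)) u₀
    linarith
  have hu1norm : ‖u₀ + dt • S dt‖ ≤ ‖u₀‖ + (a + 1) := by
    have hsm : ‖dt • S dt‖ = dt * ‖S dt‖ := by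
      rw [norm_smul, Real.norm_eq_abs, abs_of_pos hdt0]
    have h := norm_add_le u₀ (dt • S dt)
    rw [hsm] at h
    have h1 : dt * ‖S dt‖ ≤ 1 * ‖S dt‖ :=
      mul_le_mul_of_nonneg_right (le_of_lt hdt5) (norm_nonneg _)
    rw [one_mul] at h1
    linarith
  have hb1 : ‖u₀ + dt • S dt - u (t₀ + dt)‖ ≤ C₁ * dt ^ (p + 1) := hb₁ dt ⟨hdt0, hdt1⟩
  have hb2 : ‖w₀ + dt • ∑ j, b j • G dt j - w (t₀ + dt)‖ ≤ C₂ * dt ^ (p + 1) :=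
    hb₂ dt ⟨hdt0, hdt2⟩
  -- squared-norm estimate
  have hxy : ∀ x y : EuclideanSpace ℝ (Fin m), ‖x‖^2 - ‖y‖^2 = ⟪x - y, x + y⟫ := by
    intro x y
    rw [inner_sub_left, inner_add_right, inner_add_right,
      real_inner_self_eq_norm_sq, real_inner_self_eq_norm_sq, real_inner_comm y x]
    ring
  have hsq : |‖u₀ + dt • S dt‖^2 - ‖u (t₀ + dt)‖^2| ≤ C₁ * dt ^ (p + 1) * M := by
    rw [hxy]
    refine (abs_real_inner_le_norm _ _).trans ?_
    have hn2 : ‖(u₀ + dt • S dt) + u (t₀ + dt)‖ ≤ M := by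
      refine (norm_add_le _ _).trans ?_
      rw [hM]
      linarith
    exact mul_le_mul hb1 hn2 (norm_nonneg _) (by positivity)
  -- last-coordinate estimate
  have hρw : (EuclideanSpace.proj (Fin.last m))
      (w₀ + dt • ∑ j, b j • G dt j - w (t₀ + dt))
      = (⟪u₀, u₀⟫ + dt * (∑ j, b j * (2 * ⟪Y dt j, F dt j⟫)))
        - ⟪u (t₀ + dt), u (t₀ + dt)⟫ := by
    rw [map_sub, map_add, map_smul, map_sum]
    simp only [hGdef, map_smul, last_snoc, hw₀, hwdef, smul_eq_mul]
  have hlast : |(⟪u₀, u₀⟫ + dt * (∑ j, b j * (2 * ⟪Y dt j, F dt j⟫)))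
      - ⟪u (t₀ + dt), u (t₀ + dt)⟫| ≤ C₂ * dt ^ (p + 1) := by
    rw [← hρw]
    exact (abs_proj_le_norm _ _).trans hb2
  -- algebraic identity
  have e1 : ⟪u₀, S dt⟫ = ∑ j, b j * ⟪u₀, F dt j⟫ := by
    rw [show S dt = ∑ j, b j • F dt j from rfl, inner_sum]
    exact Finset.sum_congr rfl (fun j _ => real_inner_smul_right _ _ _)
  have e2 : ∀ j, ⟪Y dt j, F dt j⟫
      = ⟪u₀, F dt j⟫ + dt * ∑ k, A j k * ⟪F dt k, F dt j⟫ := by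
    intro j
    rw [show Y dt j = u₀ + dt • ∑ k, A j k • F dt k from rfl,
      inner_add_left, real_inner_smul_left, sum_inner]
    congr 2
    exact Finset.sum_congr rfl (fun k _ => real_inner_smul_left _ _ _)
  have e3 : ‖u₀ + dt • S dt‖^2
      = ⟪u₀, u₀⟫ + 2 * (dt * ⟪u₀, S dt⟫) + dt^2 * ‖S dt‖^2 := by
    rw [norm_add_sq_real, real_inner_smul_right, norm_smul, Real.norm_eq_abs,
      abs_of_pos hdt0, mul_pow, ← real_inner_self_eq_norm_sq]
  have e4 : (∑ j, b j * (2 * ⟪Y dt j, F dt j⟫))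
      = 2 * (∑ j, b j * ⟪u₀, F dt j⟫)
        + 2 * dt * (∑ j, b j * ∑ k, A j k * ⟪F dt k, F dt j⟫) := by
    rw [Finset.mul_sum, Finset.mul_sum, ← Finset.sum_add_distrib]
    refine Finset.sum_congr rfl (fun j _ => ?_)
    rw [e2 j]
    ring
  have e5 : Q dt = ∑ j, b j * ∑ k, A j k * ⟪F dt k, F dt j⟫ := by
    rw [show Q dt = ∑ i, ∑ j, b i * A i j * ⟪F dt i, F dt j⟫ from rfl]
    refine Finset.sum_congr rfl (fun i _ => ?_)
    rw [Finset.mul_sum]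
    refine Finset.sum_congr rfl (fun k _ => ?_)
    rw [real_inner_comm (F dt i) (F dt k)]
    ring
  have hident : ‖u₀ + dt • S dt‖^2
      - (⟪u₀, u₀⟫ + dt * (∑ j, b j * (2 * ⟪Y dt j, F dt j⟫)))
      = dt^2 * (‖S dt‖^2 - 2 * Q dt) := by
    rw [e3, e4, e1, e5]
    ring
  -- combine
  have h6 : |dt^2 * (‖S dt‖^2 - 2 * Q dt)| ≤ (C₁ * M + C₂) * dt ^ (p + 1) := by
    rw [← hident]
    have habs := abs_sub_le (‖u₀ + dt • S dt‖^2) (‖u (t₀ + dt)‖^2)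
      (⟪u₀, u₀⟫ + dt * (∑ j, b j * (2 * ⟪Y dt j, F dt j⟫)))
    have h7 : |‖u (t₀ + dt)‖^2
        - (⟪u₀, u₀⟫ + dt * (∑ j, b j * (2 * ⟪Y dt j, F dt j⟫)))|
        = |(⟪u₀, u₀⟫ + dt * (∑ j, b j * (2 * ⟪Y dt j, F dt j⟫)))
          - ⟪u (t₀ + dt), u (t₀ + dt)⟫| := by
      rw [abs_sub_comm, real_inner_self_eq_norm_sq, real_inner_self_eq_norm_sq]
    rw [h7] at habs
    have hr : (C₁ * M + C₂) * dt ^ (p + 1)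
        = C₁ * dt ^ (p + 1) * M + C₂ * dt ^ (p + 1) := by ring
    rw [hr]
    linarith
  have hfinal : |‖S dt‖^2 - 2 * Q dt| ≤ (C₁ * M + C₂) * dt ^ (p - 1) := by
    have hpow : dt ^ (p + 1) = dt^2 * dt ^ (p - 1) := by
      rw [← pow_add]
      congr 1
      omega
    rw [abs_mul, abs_of_pos (by positivity : (0:ℝ) < dt^2), hpow, ← mul_assoc,
      mul_comm (C₁ * M + C₂) (dt^2), mul_assoc] at h6
    exact le_of_mul_le_mul_left h6 (by positivity)
  -- conclusion
  have hcond : ¬ ((∑ j, b j • F dt j) = 0) := by rw [hSdt]; exact hSne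
  have hgam : RKGamma A b F dt = 2 * Q dt / ‖S dt‖ ^ 2 := by
    rw [RKGamma, if_neg hcond]
  rw [hgam]
  have hdiv : 2 * Q dt / ‖S dt‖^2 - 1 = (2 * Q dt - ‖S dt‖^2) / ‖S dt‖^2 := by
    field_simp
  rw [hdiv, abs_div, abs_of_pos hSsq]
  have hd2 : a^2 / 4 ≤ ‖S dt‖^2 := by
    have h1 := pow_le_pow_left₀ (by positivity : (0:ℝ) ≤ a/2) hSlb.le 2
    calc a^2/4 = (a/2)^2 := by ring
      _ ≤ ‖S dt‖^2 := h1
  calc |2 * Q dt - ‖S dt‖^2| / ‖S dt‖^2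
      ≤ ((C₁ * M + C₂) * dt ^ (p - 1)) / (a^2 / 4) :=
        div_le_div₀ (by positivity) (by rw [abs_sub_comm]; exact hfinal)
          (by positivity) hd2
    _ = (C₁ * M + C₂) / (a^2 / 4) * dt ^ (p - 1) := by ring
end

section
/- (Theorem 2.4, part 1: IDT interpretation.) Let (A, b) be an explicit s-stage Runge–Kutta method of order p (in the sense that for every C^∞ right-hand side the one-step local error is O(Δt^{p+1})). Let f be C^∞ with exact solution u defined on a neighborhood of t₀, and let γ : (0, δ₀) → ℝ be any function satisfying γ(Δt) = 1 + O(Δt^{p−1}). Then the relaxed update u¹_γ(Δt) = u₀ + γ(Δt) Δt Σⱼ bⱼ fⱼ, interpreted as an approximation to u(t₀ + Δt), has order p − 1: there exist C, δ > 0 such that ‖u¹_γ(Δt) − u(t₀ + Δt)‖ ≤ C Δt^{p} for all Δt ∈ (0, δ). -/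
open scoped RealInnerProductSpace
open Classical

/-- Theorem 2.4, part 1: IDT interpretation.  Let `(A, b)` be an
explicit `s`-stage Runge–Kutta method of order `p`, let `f` be `C^∞` with exact
solution `u` defined on a neighborhood of `t₀`, and let `γ` be any function satisfying
`γ(dt) = 1 + O(dt^(p−1))`.  Then the relaxed update
`u¹_γ(dt) = u₀ + γ(dt) dt ∑ⱼ bⱼ fⱼ`, interpreted as an approximation to `u(t₀ + dt)`,
has order `p − 1`: there exist `C, δ > 0` with
`‖u¹_γ(dt) − u(t₀ + dt)‖ ≤ C dt^p` for all `dt ∈ (0, δ)`. -/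
theorem rrk_idt_order
    {s m p : ℕ} (A : Fin s → Fin s → ℝ) (b : Fin s → ℝ)
    (hA : ∀ i j : Fin s, (i : ℕ) ≤ (j : ℕ) → A i j = 0)
    (horder : RKHasOrder A b p)
    (f : ℝ → EuclideanSpace ℝ (Fin m) → EuclideanSpace ℝ (Fin m))
    (hf : ContDiff ℝ (⊤ : ℕ∞) (Function.uncurry f))
    (t₀ : ℝ) (u₀ : EuclideanSpace ℝ (Fin m))
    (F : ℝ → Fin s → EuclideanSpace ℝ (Fin m))
    (hF : ∀ dt i, F dt i =
      f (t₀ + (∑ j, A i j) * dt) (u₀ + dt • ∑ j, A i j • F dt j))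
    (u : ℝ → EuclideanSpace ℝ (Fin m)) (ε : ℝ) (hε : 0 < ε)
    (hu : ∀ t ∈ Set.Ioo (t₀ - ε) (t₀ + ε), HasDerivAt u (f t (u t)) t)
    (hu₀ : u t₀ = u₀)
    (γ : ℝ → ℝ) (C₀ δ₀ : ℝ) (hC₀ : 0 < C₀) (hδ₀ : 0 < δ₀)
    (hγ : ∀ dt ∈ Set.Ioo (0 : ℝ) δ₀, |γ dt - 1| ≤ C₀ * dt ^ (p - 1)) :
    ∃ C δ : ℝ, 0 < C ∧ 0 < δ ∧
      ∀ dt ∈ Set.Ioo (0 : ℝ) δ,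
        ‖u₀ + (γ dt * dt) • ∑ j, b j • F dt j - u (t₀ + dt)‖ ≤ C * dt ^ p := by
  obtain ⟨C, δ, hC, hδ, hbound⟩ := horder m f hf t₀ u₀ F hF u ε hε hu hu₀
  -- bound the solution increment on a compact neighborhood
  set K : Set ℝ := Set.Icc (t₀ - ε/2) (t₀ + ε/2) with hK
  have hKsub : K ⊆ Set.Ioo (t₀ - ε) (t₀ + ε) := by
    intro t ht
    obtain ⟨h1, h2⟩ := ht
    constructor <;> nlinarith
  have hcu : ContinuousOn u K := fun t ht =>
    ((hu t (hKsub ht)).continuousAt).continuousWithinAt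
  have hg : ContinuousOn (fun t => f t (u t)) K := by
    have : ContinuousOn (fun t => Function.uncurry f (t, u t)) K :=
      hf.continuous.comp_continuousOn (continuousOn_id.prodMk hcu)
    exact this
  have hKcompact : IsCompact K := isCompact_Icc
  have ht₀K : t₀ ∈ K := by constructor <;> nlinarith
  obtain ⟨M, hM⟩ := hKcompact.exists_bound_of_continuousOn hg
  have hM0 : 0 ≤ M := le_trans (norm_nonneg _) (hM t₀ ht₀K)
  have hLip : ∀ dt : ℝ, 0 ≤ dt → dt ≤ ε/2 → ‖u (t₀ + dt) - u₀‖ ≤ M * dt := by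
    intro dt h0 h1
    have hmem : t₀ + dt ∈ K := by constructor <;> nlinarith
    have hderiv : ∀ t ∈ K, HasDerivWithinAt u (f t (u t)) K t := fun t ht =>
      (hu t (hKsub ht)).hasDerivWithinAt
    have := (convex_Icc _ _).norm_image_sub_le_of_norm_hasDerivWithin_le
      hderiv hM ht₀K hmem
    rw [hu₀] at this
    calc ‖u (t₀ + dt) - u₀‖ ≤ M * ‖(t₀ + dt) - t₀‖ := this
      _ = M * dt := by rw [show (t₀ + dt) - t₀ = dt by ring, Real.norm_eq_abs,
            abs_of_nonneg h0]
  refine ⟨C + C₀ * C + C₀ * M + 1, min δ (min (ε/2) (min 1 δ₀)), by positivity, by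
    simp only [lt_min_iff]; exact ⟨hδ, by linarith, one_pos, hδ₀⟩, ?_⟩
  intro dt hdt
  obtain ⟨hdt0, hdtδ⟩ := hdt
  have hdtδ' : dt < δ := lt_of_lt_of_le hdtδ (min_le_left _ _)
  have hdtε : dt ≤ ε/2 := le_of_lt (lt_of_lt_of_le hdtδ
    (le_trans (min_le_right _ _) (min_le_left _ _)))
  have hdt1 : dt ≤ 1 := le_of_lt (lt_of_lt_of_le hdtδ
    (le_trans (min_le_right _ _) (le_trans (min_le_right _ _) (min_le_left _ _))))
  have hdtδ₀ : dt < δ₀ := lt_of_lt_of_le hdtδ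
    (le_trans (min_le_right _ _) (le_trans (min_le_right _ _) (min_le_right _ _)))
  set S := ∑ j, b j • F dt j with hS
  have hRK : ‖u₀ + dt • S - u (t₀ + dt)‖ ≤ C * dt ^ (p + 1) :=
    hbound dt ⟨hdt0, hdtδ'⟩
  have hγdt : |γ dt - 1| ≤ C₀ * dt ^ (p - 1) := hγ dt ⟨hdt0, hdtδ₀⟩
  have hsplit : u₀ + (γ dt * dt) • S - u (t₀ + dt)
      = (u₀ + dt • S - u (t₀ + dt)) + ((γ dt - 1) * dt) • S := by
    rw [sub_mul, one_mul, sub_smul]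
    abel
  have hdS : ‖dt • S‖ ≤ C * dt ^ (p + 1) + M * dt := by
    have : dt • S = (u₀ + dt • S - u (t₀ + dt)) + (u (t₀ + dt) - u₀) := by abel
    rw [this]
    exact le_trans (norm_add_le _ _)
      (add_le_add hRK (hLip dt (le_of_lt hdt0) hdtε))
  have hterm2 : ‖((γ dt - 1) * dt) • S‖
      ≤ C₀ * dt ^ (p - 1) * (C * dt ^ (p + 1) + M * dt) := by
    have h1 : ‖((γ dt - 1) * dt) • S‖ = |γ dt - 1| * ‖dt • S‖ := by
      rw [mul_smul, norm_smul, Real.norm_eq_abs]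
    rw [h1]
    exact mul_le_mul hγdt hdS (norm_nonneg _) (by positivity)
  have hpow1 : dt ^ (p + 1) ≤ dt ^ p :=
    pow_le_pow_of_le_one (le_of_lt hdt0) hdt1 (by omega)
  have hpow2 : dt ^ (p - 1) * dt ^ (p + 1) ≤ dt ^ p := by
    rw [← pow_add]
    exact pow_le_pow_of_le_one (le_of_lt hdt0) hdt1 (by omega)
  have hpow3 : dt ^ (p - 1) * dt ≤ dt ^ p := by
    rw [← pow_succ]
    exact pow_le_pow_of_le_one (le_of_lt hdt0) hdt1 (by omega)
  calc ‖u₀ + (γ dt * dt) • S - u (t₀ + dt)‖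
      ≤ ‖u₀ + dt • S - u (t₀ + dt)‖ + ‖((γ dt - 1) * dt) • S‖ := by
        rw [hsplit]; exact norm_add_le _ _
    _ ≤ C * dt ^ (p + 1) + C₀ * dt ^ (p - 1) * (C * dt ^ (p + 1) + M * dt) :=
        add_le_add hRK hterm2
    _ ≤ (C + C₀ * C + C₀ * M + 1) * dt ^ p := by
        have e2 := mul_le_mul_of_nonneg_left hpow2 (le_of_lt hC₀)
        have e3 := mul_le_mul_of_nonneg_left hpow3 hM0
        have e0 := pow_pos hdt0 p
        nlinarith
end

section
/- (Theorem 2.4, part 2: relaxation interpretation.) Let (A, b) be an explicit s-stage Runge–Kutta method of order p (in the sense that for every C^∞ right-hand side the one-step local error is O(Δt^{p+1})). Let f be C^∞ with exact solution u defined on a neighborhood of t₀, and let γ : (0, δ₀) → ℝ be any function satisfying γ(Δt) = 1 + O(Δt^{p−1}). Then the relaxed update u¹_γ(Δt) = u₀ + γ(Δt) Δt Σⱼ bⱼ fⱼ, interpreted as an approximation to u(t₀ + γ(Δt)Δt), has order p: there exist C, δ > 0 such that ‖u¹_γ(Δt) − u(t₀ + γ(Δt)Δt)‖ ≤ C Δt^{p+1}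 for all Δt ∈ (0, δ). -/
open scoped RealInnerProductSpace
open Classical
open Topology Filter

noncomputable def RKupd {s m : ℕ} (b : Fin s → ℝ)
    (F : ℝ → Fin s → EuclideanSpace ℝ (Fin m)) (dt : ℝ) : EuclideanSpace ℝ (Fin m) :=
  ∑ j, b j • F dt j

-- smoothness of the stage sum
lemma rk_upd_contDiff {s m : ℕ} (A : Fin s → Fin s → ℝ) (b : Fin s → ℝ)
    (hA : ∀ i j : Fin s, (i : ℕ) ≤ (j : ℕ) → A i j = 0)
    (f : ℝ → EuclideanSpace ℝ (Fin m) → EuclideanSpace ℝ (Fin m))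
    (hf : ContDiff ℝ (⊤ : ℕ∞) (Function.uncurry f))
    (t₀ : ℝ) (u₀ : EuclideanSpace ℝ (Fin m))
    (F : ℝ → Fin s → EuclideanSpace ℝ (Fin m))
    (hF : ∀ dt i, F dt i =
      f (t₀ + (∑ j, A i j) * dt) (u₀ + dt • ∑ j, A i j • F dt j)) :
    ContDiff ℝ (⊤ : ℕ∞) (RKupd b F) := by
  have key : ∀ n : ℕ, ∀ i : Fin s, (i : ℕ) < n → ContDiff ℝ (⊤ : ℕ∞) (fun dt => F dt i) := by
    intro n
    induction n with
    | zero => intro i h; omega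
    | succ n ih =>
      intro i hi
      have heq : (fun dt => F dt i) = fun dt =>
          Function.uncurry f (t₀ + (∑ j, A i j) * dt, u₀ + dt • ∑ j, A i j • F dt j) :=
        funext fun dt => hF dt i
      rw [heq]
      apply hf.comp
      apply ContDiff.prodMk
      · exact contDiff_const.add (contDiff_const.mul contDiff_id)
      · apply contDiff_const.add
        apply contDiff_id.smul
        apply ContDiff.sum
        intro j _
        by_cases h : (i : ℕ) ≤ (j : ℕ)
        · simp only [hA i j h, zero_smul]; exact contDiff_const
        · exact (ih j (by omega)).const_smul _
  apply ContDiff.sum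
  intro j _
  exact (key s j j.isLt).const_smul _

-- order ≥ 1 implies ∑ b = 1
lemma rk_consistent {s : ℕ} (A : Fin s → Fin s → ℝ) (b : Fin s → ℝ) {p : ℕ}
    (hp : 1 ≤ p) (horder : RKHasOrder A b p) : ∑ j, b j = 1 := by
  classical
  set o : EuclideanSpace ℝ (Fin 1) := WithLp.toLp 2 (fun _ => (1 : ℝ)) with ho
  have hno : ‖o‖ = 1 := by
    simp [ho, EuclideanSpace.norm_eq]
  have hcd : ContDiff ℝ (⊤ : ℕ∞) (Function.uncurry
      (fun (_ : ℝ) (_ : EuclideanSpace ℝ (Fin 1)) => o)) := contDiff_const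
  obtain ⟨C, δ, hC, hδ, hbound⟩ := horder 1 (fun _ _ => o) hcd 0 0 (fun _ _ => o)
    (fun dt i => rfl) (fun t => t • o) 1 one_pos
    (fun t _ => by simpa using (hasDerivAt_id t).smul_const o) (by simp)
  -- bound: ‖dt • ∑ j, b j • o - (0 + dt) • o‖ ≤ C * dt ^ (p+1)
  have key : ∀ dt ∈ Set.Ioo (0:ℝ) δ, |(∑ j, b j) - 1| * dt ≤ C * dt ^ (p + 1) := by
    intro dt hdt
    have h := hbound dt hdt
    have heq : (0 : EuclideanSpace ℝ (Fin 1)) + dt • ∑ j, b j • o - (0 + dt) • o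
        = ((∑ j, b j) - 1) • (dt • o) := by
      rw [← Finset.sum_smul]
      rw [sub_smul, smul_smul, smul_smul]
      simp [mul_comm]
    rw [heq] at h
    rw [norm_smul, norm_smul, hno, Real.norm_eq_abs, Real.norm_eq_abs,
      abs_of_pos hdt.1] at h
    calc |(∑ j, b j) - 1| * dt = |(∑ j, b j) - 1| * (dt * 1) := by ring
    _ ≤ C * dt ^ (p+1) := by linarith [h]
  have hle : ∀ dt ∈ Set.Ioo (0:ℝ) (min δ 1), |(∑ j, b j) - 1| ≤ C * dt := by
    intro dt hdt
    obtain ⟨h0, h1⟩ := hdt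
    have hdtδ : dt < δ := lt_of_lt_of_le h1 (min_le_left _ _)
    have hdt1 : dt ≤ 1 := le_of_lt (lt_of_lt_of_le h1 (min_le_right _ _))
    have h := key dt ⟨h0, hdtδ⟩
    have hpow : dt ^ (p + 1) ≤ dt ^ 2 := pow_le_pow_of_le_one (le_of_lt h0) hdt1 (by omega)
    have : |(∑ j, b j) - 1| * dt ≤ C * dt ^ 2 := le_trans h (by nlinarith)
    have h2 : dt ^ 2 = dt * dt := sq dt
    nlinarith
  have hzero : |(∑ j, b j) - 1| ≤ 0 := by
    have hne : (𝓝[>] (0:ℝ)).NeBot := nhdsGT_neBot 0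
    have htend : Filter.Tendsto (fun dt : ℝ => C * dt) (𝓝[>] 0) (𝓝 0) := by
      have : Filter.Tendsto (fun dt : ℝ => C * dt) (𝓝 0) (𝓝 (C * 0)) :=
        (continuous_const.mul continuous_id).tendsto 0
      simpa using this.mono_left nhdsWithin_le_nhds
    refine ge_of_tendsto htend ?_
    filter_upwards [Ioo_mem_nhdsGT_of_mem ⟨le_refl (0:ℝ), lt_min hδ one_pos⟩] with dt hdt
    exact hle dt hdt
  have := abs_nonpos_iff.1 hzero
  have h3 : (∑ j, b j) - 1 = 0 := this
  linarith

set_option maxHeartbeats 2000000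

/-- Theorem 2.4, part 2: relaxation interpretation.  Let `(A, b)` be an
explicit `s`-stage Runge–Kutta method of order `p`, let `f` be `C^∞` with exact
solution `u` defined on a neighborhood of `t₀`, and let `γ` be any function satisfying
`γ(dt) = 1 + O(dt^(p−1))`.  Then the relaxed update
`u¹_γ(dt) = u₀ + γ(dt) dt ∑ⱼ bⱼ fⱼ`, interpreted as an approximation to `u(t₀ + γ(dt) dt)`,
has order `p`: there exist `C, δ > 0` with
`‖u¹_γ(dt) − u(t₀ + γ(dt) dt)‖ ≤ C dt^(p+1)` for all `dt ∈ (0, δ)`. -/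
theorem rrk_relaxation_order
    {s m p : ℕ} (A : Fin s → Fin s → ℝ) (b : Fin s → ℝ)
    (hA : ∀ i j : Fin s, (i : ℕ) ≤ (j : ℕ) → A i j = 0)
    (horder : RKHasOrder A b p)
    (f : ℝ → EuclideanSpace ℝ (Fin m) → EuclideanSpace ℝ (Fin m))
    (hf : ContDiff ℝ (⊤ : ℕ∞) (Function.uncurry f))
    (t₀ : ℝ) (u₀ : EuclideanSpace ℝ (Fin m))
    (F : ℝ → Fin s → EuclideanSpace ℝ (Fin m))
    (hF : ∀ dt i, F dt i =
      f (t₀ + (∑ j, A i j) * dt) (u₀ + dt • ∑ j, A i j • F dt j))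
    (u : ℝ → EuclideanSpace ℝ (Fin m)) (ε : ℝ) (hε : 0 < ε)
    (hu : ∀ t ∈ Set.Ioo (t₀ - ε) (t₀ + ε), HasDerivAt u (f t (u t)) t)
    (hu₀ : u t₀ = u₀)
    (γ : ℝ → ℝ) (C₀ δ₀ : ℝ) (hC₀ : 0 < C₀) (hδ₀ : 0 < δ₀)
    (hγ : ∀ dt ∈ Set.Ioo (0 : ℝ) δ₀, |γ dt - 1| ≤ C₀ * dt ^ (p - 1)) :
    ∃ C δ : ℝ, 0 < C ∧ 0 < δ ∧
      ∀ dt ∈ Set.Ioo (0 : ℝ) δ,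
        ‖u₀ + (γ dt * dt) • ∑ j, b j • F dt j - u (t₀ + γ dt * dt)‖ ≤ C * dt ^ (p + 1) := by
  classical
  set S : ℝ → EuclideanSpace ℝ (Fin m) := RKupd b F with hSdef
  have hSrw : ∀ dt, (∑ j, b j • F dt j) = S dt := fun _ => rfl
  -- Lipschitz constant for S near 0
  have hSc : ContDiff ℝ (⊤ : ℕ∞) S := rk_upd_contDiff A b hA f hf t₀ u₀ F hF
  obtain ⟨K, tS, htS, hKlip⟩ :=
    ((hSc.of_le (by simp)).contDiffAt (x := (0:ℝ))).exists_lipschitzOnWith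
  obtain ⟨r, hr, hball⟩ := Metric.mem_nhds_iff.1 htS
  have hSlip : ∀ x ∈ Metric.ball (0:ℝ) r, ∀ y ∈ Metric.ball (0:ℝ) r,
      ‖S x - S y‖ ≤ (K : ℝ) * |x - y| := by
    intro x hx y hy
    have := hKlip.dist_le_mul x (hball hx) y (hball hy)
    rwa [dist_eq_norm, Real.dist_eq] at this
  -- Lipschitz constant for u near t₀
  have hIu : Set.Icc (t₀ - ε/2) (t₀ + ε/2) ⊆ Set.Ioo (t₀ - ε) (t₀ + ε) := by
    intro x hx
    simp only [Set.mem_Icc] at hx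
    constructor <;> [linarith [hx.1]; linarith [hx.2]]
  have hucont : ContinuousOn u (Set.Icc (t₀ - ε/2) (t₀ + ε/2)) := fun x hx =>
    ((hu x (hIu hx)).continuousAt).continuousWithinAt
  have hgcont : ContinuousOn (fun t => f t (u t)) (Set.Icc (t₀ - ε/2) (t₀ + ε/2)) := by
    have : ContinuousOn (fun t : ℝ => ((t, u t) : ℝ × EuclideanSpace ℝ (Fin m)))
        (Set.Icc (t₀ - ε/2) (t₀ + ε/2)) := (continuousOn_id).prodMk hucont
    exact (hf.continuous.comp_continuousOn this)
  obtain ⟨Mu, hMu⟩ :=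
    (isCompact_Icc : IsCompact (Set.Icc (t₀ - ε/2) (t₀ + ε/2))).exists_bound_of_continuousOn hgcont
  have hMu0 : 0 ≤ Mu := by
    have := hMu t₀ (by constructor <;> [linarith; linarith])
    exact le_trans (norm_nonneg _) this
  have hulip : ∀ x ∈ Set.Icc (t₀ - ε/2) (t₀ + ε/2), ∀ y ∈ Set.Icc (t₀ - ε/2) (t₀ + ε/2),
      ‖u y - u x‖ ≤ Mu * |y - x| := by
    intro x hx y hy
    have := (convex_Icc (t₀ - ε/2) (t₀ + ε/2)).norm_image_sub_le_of_norm_hasDerivWithin_le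
      (f' := fun t => f t (u t))
      (fun t ht => (hu t (hIu ht)).hasDerivWithinAt) (fun t ht => hMu t ht) hx hy
    simpa [Real.norm_eq_abs] using this
  -- Lipschitz constant for f near (t₀, u₀)
  obtain ⟨Kf, tf, htf, hKflip⟩ :=
    ((hf.of_le (by simp)).contDiffAt
      (x := ((t₀, u₀) : ℝ × EuclideanSpace ℝ (Fin m)))).exists_lipschitzOnWith
  obtain ⟨rf, hrf, hballf⟩ := Metric.mem_nhds_iff.1 htf
  -- bound for S near 0
  set MS : ℝ := ‖S 0‖ + (K : ℝ) * r with hMS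
  have hSbd : ∀ x ∈ Metric.ball (0:ℝ) r, ‖S x‖ ≤ MS := by
    intro x hx
    have h1 : ‖S x - S 0‖ ≤ (K : ℝ) * |x - 0| :=
      hSlip x hx 0 (Metric.mem_ball_self hr)
    have h2 : |x - 0| ≤ r := by
      have := Metric.mem_ball.1 hx
      rw [Real.dist_eq] at this
      linarith [le_of_lt this]
    have h3 : (K : ℝ) * |x - 0| ≤ (K : ℝ) * r :=
      mul_le_mul_of_nonneg_left h2 K.coe_nonneg
    calc ‖S x‖ ≤ ‖S 0‖ + ‖S x - S 0‖ := by
          have := norm_add_le (S 0) (S x - S 0); simpa using this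
      _ ≤ MS := by rw [hMS]; linarith
  have hMS0 : 0 ≤ MS := by
    have := hSbd 0 (Metric.mem_ball_self hr)
    linarith [norm_nonneg (S 0)]
  simp only [hSrw]
  rcases Nat.eq_zero_or_pos p with hp0 | hp1
  · -- case p = 0
    subst hp0
    refine ⟨(1 + C₀) * (MS + Mu) + 1, min δ₀ (min r (min 1 (ε / (2 * (1 + C₀))))), by positivity,
      by positivity, ?_⟩
    intro dt hdt
    obtain ⟨hdt0, hdtlt⟩ := hdt
    have hdtδ₀ : dt < δ₀ := lt_of_lt_of_le hdtlt (min_le_left _ _)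
    have hdtr : dt < r := lt_of_lt_of_le hdtlt (le_trans (min_le_right _ _) (min_le_left _ _))
    have hdtε : dt ≤ ε / (2 * (1 + C₀)) := le_of_lt (lt_of_lt_of_le hdtlt
      (le_trans (min_le_right _ _) (le_trans (min_le_right _ _) (min_le_right _ _))))
    have hγb : |γ dt - 1| ≤ C₀ := by
      have := hγ dt ⟨hdt0, hdtδ₀⟩
      simpa using this
    set τ : ℝ := γ dt * dt with hτ
    have hτabs : |τ| ≤ (1 + C₀) * dt := by
      rw [hτ, abs_mul, abs_of_pos hdt0]
      have : |γ dt| ≤ 1 + C₀ := by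
        have := abs_sub_abs_le_abs_sub (γ dt) 1
        simp only [abs_one] at this
        linarith
      exact mul_le_mul_of_nonneg_right this (le_of_lt hdt0)
    have hτε : |τ| ≤ ε / 2 := by
      have h1 : (1 + C₀) * dt ≤ (1 + C₀) * (ε / (2 * (1 + C₀))) :=
        mul_le_mul_of_nonneg_left hdtε (by positivity)
      have h2 : (1 + C₀) * (ε / (2 * (1 + C₀))) = ε / 2 := by field_simp
      linarith
    have hmem : t₀ + τ ∈ Set.Icc (t₀ - ε/2) (t₀ + ε/2) := by
      constructor <;> [linarith [neg_abs_le τ]; linarith [le_abs_self τ]]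
    have hmem0 : t₀ ∈ Set.Icc (t₀ - ε/2) (t₀ + ε/2) := by
      constructor <;> linarith
    have hrw : u₀ + τ • S dt - u (t₀ + τ) = τ • S dt - (u (t₀ + τ) - u t₀) := by
      rw [hu₀]; abel
    rw [hrw]
    have hbd1 : ‖τ • S dt‖ ≤ |τ| * MS := by
      rw [norm_smul, Real.norm_eq_abs]
      exact mul_le_mul_of_nonneg_left (hSbd dt (by
        rw [Metric.mem_ball, Real.dist_eq, sub_zero]
        rw [abs_of_pos hdt0]; linarith)) (abs_nonneg _)
    have hbd2 : ‖u (t₀ + τ) - u t₀‖ ≤ Mu * |τ| := by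
      have := hulip t₀ hmem0 (t₀ + τ) hmem
      simpa using this
    calc ‖τ • S dt - (u (t₀ + τ) - u t₀)‖ ≤ ‖τ • S dt‖ + ‖u (t₀ + τ) - u t₀‖ :=
        norm_sub_le _ _
      _ ≤ |τ| * MS + Mu * |τ| := add_le_add hbd1 hbd2
      _ ≤ (1 + C₀) * dt * MS + Mu * ((1 + C₀) * dt) := by
          nlinarith [hτabs, hMS0, hMu0, abs_nonneg τ]
      _ ≤ ((1 + C₀) * (MS + Mu) + 1) * dt ^ (0 + 1) := by
          rw [pow_one]; nlinarith
  · -- case p ≥ 1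
    have hb : ∑ j, b j = 1 := rk_consistent A b hp1 horder
    set w : EuclideanSpace ℝ (Fin m) := f t₀ u₀ with hw
    have hF0 : ∀ i, F 0 i = w := by
      intro i
      rw [hF]
      simp [hw]
    have hS0 : S 0 = w := by
      rw [hSdef]
      show ∑ j, b j • F 0 j = w
      simp only [hF0]
      rw [← Finset.sum_smul, hb, one_smul]
    rcases eq_or_lt_of_le (show 1 ≤ p from hp1) with hp1' | hp2
    · -- case p = 1
      subst hp1'
      set r₃ : ℝ := min (ε/2) (rf/(2*(1+Mu))) with hr₃
      have hMu1 : (0:ℝ) < 1 + Mu := by linarith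
      have hr₃0 : 0 < r₃ := lt_min (by positivity) (by positivity)
      have hmem0' : t₀ ∈ Set.Icc (t₀ - ε/2) (t₀ + ε/2) := by constructor <;> linarith
      have taylor : ∀ τ : ℝ, |τ| ≤ r₃ →
          ‖u (t₀ + τ) - u₀ - τ • w‖ ≤ ((Kf:ℝ) * (1 + Mu)) * τ ^ 2 := by
        intro τ hτr
        have hτε2 : |τ| ≤ ε/2 := le_trans hτr (min_le_left _ _)
        have hxbd : ∀ x ∈ Set.uIcc t₀ (t₀ + τ), |x - t₀| ≤ |τ| := by
          intro x hx
          rcases Set.mem_uIcc.1 hx with ⟨h1, h2⟩ | ⟨h1, h2⟩ <;> rw [abs_le] <;>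
            exact ⟨by linarith [le_abs_self τ, neg_abs_le τ],
              by linarith [le_abs_self τ, neg_abs_le τ]⟩
        have hsub1 : Set.uIcc t₀ (t₀ + τ) ⊆ Set.Icc (t₀ - ε/2) (t₀ + ε/2) := by
          intro x hx
          have h := abs_le.1 (hxbd x hx)
          exact ⟨by linarith [h.1], by linarith [h.2]⟩
        have hd : ∀ x ∈ Set.uIcc t₀ (t₀ + τ),
            dist ((x, u x) : ℝ × EuclideanSpace ℝ (Fin m)) (t₀, u₀) ≤ (1 + Mu) * |τ| := by
          intro x hx
          have hux : ‖u x - u₀‖ ≤ Mu * |τ| := by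
            have h := hulip t₀ hmem0' x (hsub1 hx)
            rw [hu₀] at h
            calc ‖u x - u₀‖ ≤ Mu * |x - t₀| := h
              _ ≤ Mu * |τ| := mul_le_mul_of_nonneg_left (hxbd x hx) hMu0
          rw [Prod.dist_eq]
          apply max_le
          · rw [Real.dist_eq]; nlinarith [hxbd x hx, abs_nonneg τ]
          · rw [dist_eq_norm]; nlinarith [abs_nonneg τ]
        have hdlt : (1 + Mu) * |τ| < rf := by
          have h1 : |τ| ≤ rf / (2 * (1 + Mu)) := le_trans hτr (min_le_right _ _)
          calc (1 + Mu) * |τ| ≤ (1 + Mu) * (rf / (2 * (1 + Mu))) :=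
              mul_le_mul_of_nonneg_left h1 (le_of_lt hMu1)
            _ = rf / 2 := by field_simp
            _ < rf := by linarith
        have hdbd : ∀ x ∈ Set.uIcc t₀ (t₀ + τ),
            ‖f x (u x) - w‖ ≤ (Kf:ℝ) * (1 + Mu) * |τ| := by
          intro x hx
          have hmemball : ((x, u x) : ℝ × EuclideanSpace ℝ (Fin m)) ∈
              Metric.ball ((t₀, u₀) : ℝ × EuclideanSpace ℝ (Fin m)) rf :=
            Metric.mem_ball.2 (lt_of_le_of_lt (hd x hx) hdlt)
          have h := hKflip.dist_le_mul (x, u x) (hballf hmemball) (t₀, u₀)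
            (hballf (Metric.mem_ball_self hrf))
          rw [Function.uncurry_apply_pair, Function.uncurry_apply_pair, dist_eq_norm] at h
          calc ‖f x (u x) - w‖ ≤ (Kf:ℝ) * dist ((x, u x) : ℝ × EuclideanSpace ℝ (Fin m)) (t₀, u₀) := h
            _ ≤ (Kf:ℝ) * ((1 + Mu) * |τ|) :=
              mul_le_mul_of_nonneg_left (hd x hx) Kf.coe_nonneg
            _ = (Kf:ℝ) * (1 + Mu) * |τ| := by ring
        have hvd : ∀ x ∈ Set.uIcc t₀ (t₀ + τ),
            HasDerivWithinAt (fun t => u t - (t - t₀) • w) (f x (u x) - w)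
              (Set.uIcc t₀ (t₀ + τ)) x := by
          intro x hx
          have h1 := hu x (hIu (hsub1 hx))
          have h2 : HasDerivAt (fun t : ℝ => (t - t₀) • w) ((1:ℝ) • w) x :=
            ((hasDerivAt_id x).sub_const t₀).smul_const w
          rw [one_smul] at h2
          exact (h1.sub h2).hasDerivWithinAt
        have hmvt := (convex_uIcc t₀ (t₀ + τ)).norm_image_sub_le_of_norm_hasDerivWithin_le
          hvd hdbd Set.left_mem_uIcc Set.right_mem_uIcc
        have hv0 : u t₀ - (t₀ - t₀) • w = u₀ := by rw [hu₀]; simp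
        have hv1 : u (t₀ + τ) - (t₀ + τ - t₀) • w = u (t₀ + τ) - τ • w := by
          congr 2; ring
        rw [hv0, hv1] at hmvt
        have hnorm : ‖t₀ + τ - t₀‖ = |τ| := by rw [Real.norm_eq_abs]; congr 1; ring
        rw [hnorm] at hmvt
        calc ‖u (t₀ + τ) - u₀ - τ • w‖ = ‖u (t₀ + τ) - τ • w - u₀‖ := by rw [sub_right_comm]
          _ ≤ (Kf:ℝ) * (1 + Mu) * |τ| * |τ| := hmvt
          _ = (Kf:ℝ) * (1 + Mu) * τ ^ 2 := by rw [mul_assoc, abs_mul_abs_self]; ring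
      -- assembly for p = 1
      have hCpos : (0:ℝ) < (1 + C₀) * (K:ℝ) + (Kf:ℝ) * (1 + Mu) * (1 + C₀) ^ 2 + 1 := by
        have h1 : (0:ℝ) ≤ (1 + C₀) * (K:ℝ) :=
          mul_nonneg (by linarith) K.coe_nonneg
        have h2 : (0:ℝ) ≤ (Kf:ℝ) * (1 + Mu) * (1 + C₀) ^ 2 :=
          mul_nonneg (mul_nonneg Kf.coe_nonneg (by linarith)) (by positivity)
        linarith
      refine ⟨(1 + C₀) * (K:ℝ) + (Kf:ℝ) * (1 + Mu) * (1 + C₀) ^ 2 + 1,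
        min δ₀ (min r (r₃ / (1 + C₀))), hCpos, by positivity, ?_⟩
      intro dt hdt
      obtain ⟨hdt0, hdtlt⟩ := hdt
      have hdtδ₀ : dt < δ₀ := lt_of_lt_of_le hdtlt (min_le_left _ _)
      have hdtr : dt < r := lt_of_lt_of_le hdtlt (le_trans (min_le_right _ _) (min_le_left _ _))
      have hdtr₃ : dt ≤ r₃ / (1 + C₀) := le_of_lt (lt_of_lt_of_le hdtlt
        (le_trans (min_le_right _ _) (min_le_right _ _)))
      have hγb : |γ dt - 1| ≤ C₀ := by
        have := hγ dt ⟨hdt0, hdtδ₀⟩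
        simpa using this
      set τ : ℝ := γ dt * dt with hτ
      have hτabs : |τ| ≤ (1 + C₀) * dt := by
        rw [hτ, abs_mul, abs_of_pos hdt0]
        have : |γ dt| ≤ 1 + C₀ := by
          have := abs_sub_abs_le_abs_sub (γ dt) 1
          simp only [abs_one] at this
          linarith
        exact mul_le_mul_of_nonneg_right this (le_of_lt hdt0)
      have hτr₃ : |τ| ≤ r₃ := by
        have h1 : (1 + C₀) * dt ≤ (1 + C₀) * (r₃ / (1 + C₀)) :=
          mul_le_mul_of_nonneg_left hdtr₃ (by positivity)
        have h2 : (1 + C₀) * (r₃ / (1 + C₀)) = r₃ := by field_simp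
        linarith
      have hrw : u₀ + τ • S dt - u (t₀ + τ) =
          τ • (S dt - w) - (u (t₀ + τ) - u₀ - τ • w) := by
        rw [smul_sub]; abel
      rw [hrw]
      have hdtball : dt ∈ Metric.ball (0:ℝ) r := by
        rw [Metric.mem_ball, Real.dist_eq, sub_zero, abs_of_pos hdt0]
        exact hdtr
      have hSbd2 : ‖S dt - w‖ ≤ (K:ℝ) * dt := by
        have h := hSlip dt hdtball 0 (Metric.mem_ball_self hr)
        rw [hS0] at h
        calc ‖S dt - w‖ ≤ (K:ℝ) * |dt - 0| := h
          _ = (K:ℝ) * dt := by rw [sub_zero, abs_of_pos hdt0]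
      have htay := taylor τ hτr₃
      calc ‖τ • (S dt - w) - (u (t₀ + τ) - u₀ - τ • w)‖
          ≤ ‖τ • (S dt - w)‖ + ‖u (t₀ + τ) - u₀ - τ • w‖ := norm_sub_le _ _
        _ ≤ |τ| * ((K:ℝ) * dt) + (Kf:ℝ) * (1 + Mu) * τ ^ 2 := by
            rw [norm_smul, Real.norm_eq_abs]
            exact add_le_add (mul_le_mul_of_nonneg_left hSbd2 (abs_nonneg _)) htay
        _ ≤ ((1 + C₀) * dt) * ((K:ℝ) * dt)
            + (Kf:ℝ) * (1 + Mu) * ((1 + C₀) * dt) ^ 2 := by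
            have h1 : τ ^ 2 ≤ ((1 + C₀) * dt) ^ 2 := by
              nlinarith [abs_nonneg τ, hτabs, sq_abs τ]
            have h2 : (0:ℝ) ≤ (Kf:ℝ) * (1 + Mu) :=
              mul_nonneg Kf.coe_nonneg (by linarith)
            have h3 : |τ| * ((K:ℝ) * dt) ≤ ((1 + C₀) * dt) * ((K:ℝ) * dt) :=
              mul_le_mul_of_nonneg_right hτabs (by positivity)
            nlinarith
        _ ≤ ((1 + C₀) * (K:ℝ) + (Kf:ℝ) * (1 + Mu) * (1 + C₀) ^ 2 + 1) * dt ^ (1 + 1) := by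
            have h2 : (0:ℝ) ≤ (Kf:ℝ) * (1 + Mu) :=
              mul_nonneg Kf.coe_nonneg (by linarith)
            have h4 : dt ^ (1 + 1) = dt * dt := by ring
            rw [h4]
            nlinarith [sq_nonneg dt, mul_pos hdt0 hdt0]
    · -- case p ≥ 2
      obtain ⟨C1, δ1, hC1, hδ1, hbnd⟩ := horder m f hf t₀ u₀ F hF u ε hε hu hu₀
      have hCpos : (0:ℝ) < C1 * (3/2) ^ (p+1) + (3/2) * (K:ℝ) * C₀ + 1 := by
        have h1 : (0:ℝ) < C1 * (3/2) ^ (p+1) :=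
          mul_pos hC1 (pow_pos (by norm_num) _)
        have h2 : (0:ℝ) ≤ (3/2) * (K:ℝ) * C₀ := by
          have := K.coe_nonneg
          nlinarith
        linarith
      refine ⟨C1 * (3/2) ^ (p+1) + (3/2) * (K:ℝ) * C₀ + 1,
        min δ₀ (min 1 (min (1/(2*C₀)) (min (2/3*δ1) (2/3*r)))), hCpos, by positivity, ?_⟩
      intro dt hdt
      obtain ⟨hdt0, hdtlt⟩ := hdt
      have hdtδ₀ : dt < δ₀ := lt_of_lt_of_le hdtlt (min_le_left _ _)
      have hdt1 : dt ≤ 1 := le_of_lt (lt_of_lt_of_le hdtlt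
        (le_trans (min_le_right _ _) (min_le_left _ _)))
      have hdtC₀ : dt ≤ 1/(2*C₀) := le_of_lt (lt_of_lt_of_le hdtlt
        (le_trans (min_le_right _ _) (le_trans (min_le_right _ _) (min_le_left _ _))))
      have hdtδ1 : dt < 2/3*δ1 := lt_of_lt_of_le hdtlt
        (le_trans (min_le_right _ _) (le_trans (min_le_right _ _)
          (le_trans (min_le_right _ _) (min_le_left _ _))))
      have hdtr : dt < 2/3*r := lt_of_lt_of_le hdtlt
        (le_trans (min_le_right _ _) (le_trans (min_le_right _ _)
          (le_trans (min_le_right _ _) (min_le_right _ _))))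
      have hγ1 : |γ dt - 1| ≤ C₀ * dt ^ (p - 1) := hγ dt ⟨hdt0, hdtδ₀⟩
      have hpow1 : dt ^ (p - 1) ≤ dt := by
        calc dt ^ (p - 1) ≤ dt ^ 1 :=
            pow_le_pow_of_le_one (le_of_lt hdt0) hdt1 (by omega)
          _ = dt := pow_one dt
      have hγhalf : |γ dt - 1| ≤ 1/2 := by
        calc |γ dt - 1| ≤ C₀ * dt ^ (p - 1) := hγ1
          _ ≤ C₀ * dt := mul_le_mul_of_nonneg_left hpow1 (le_of_lt hC₀)
          _ ≤ C₀ * (1/(2*C₀)) := mul_le_mul_of_nonneg_left hdtC₀ (le_of_lt hC₀)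
          _ = 1/2 := by field_simp
      have hγlo : 1/2 ≤ γ dt := by
        have := abs_le.1 hγhalf
        linarith [this.1]
      have hγhi : γ dt ≤ 3/2 := by
        have := abs_le.1 hγhalf
        linarith [this.2]
      set τ : ℝ := γ dt * dt with hτ
      have hτ0 : 0 < τ := mul_pos (by linarith) hdt0
      have hτle : τ ≤ 3/2 * dt := by
        rw [hτ]
        nlinarith
      have hτδ1 : τ < δ1 := by nlinarith
      have hτr : τ < r := by nlinarith
      have h1 := hbnd τ ⟨hτ0, hτδ1⟩
      simp only [hSrw] at h1
      have hrw : u₀ + τ • S dt - u (t₀ + τ) =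
          (u₀ + τ • S τ - u (t₀ + τ)) + τ • (S dt - S τ) := by
        rw [smul_sub]; abel
      rw [hrw]
      have habs : |dt - τ| ≤ C₀ * dt ^ p := by
        have he : dt - τ = dt * (1 - γ dt) := by rw [hτ]; ring
        rw [he, abs_mul, abs_of_pos hdt0, abs_sub_comm]
        have hdtp : dt * dt ^ (p - 1) = dt ^ p := by
          rw [← pow_succ']
          congr 1
          omega
        calc dt * |γ dt - 1| ≤ dt * (C₀ * dt ^ (p - 1)) :=
            mul_le_mul_of_nonneg_left hγ1 (le_of_lt hdt0)
          _ = C₀ * (dt * dt ^ (p - 1)) := by ring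
          _ = C₀ * dt ^ p := by rw [hdtp]
      have hterm2 : ‖τ • (S dt - S τ)‖ ≤ (3/2) * (K:ℝ) * C₀ * dt ^ (p+1) := by
        rw [norm_smul, Real.norm_eq_abs, abs_of_pos hτ0]
        have hSd : ‖S dt - S τ‖ ≤ (K:ℝ) * |dt - τ| := by
          apply hSlip
          · rw [Metric.mem_ball, Real.dist_eq, sub_zero, abs_of_pos hdt0]
            linarith
          · rw [Metric.mem_ball, Real.dist_eq, sub_zero, abs_of_pos hτ0]
            linarith
        have h2 : (K:ℝ) * |dt - τ| ≤ (K:ℝ) * (C₀ * dt ^ p) :=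
          mul_le_mul_of_nonneg_left habs K.coe_nonneg
        have h3 : τ * ‖S dt - S τ‖ ≤ (3/2 * dt) * ((K:ℝ) * (C₀ * dt ^ p)) :=
          mul_le_mul hτle (le_trans hSd h2) (norm_nonneg _) (by positivity)
        calc τ * ‖S dt - S τ‖ ≤ (3/2 * dt) * ((K:ℝ) * (C₀ * dt ^ p)) := h3
          _ = (3/2) * (K:ℝ) * C₀ * (dt ^ p * dt) := by ring
          _ = (3/2) * (K:ℝ) * C₀ * dt ^ (p+1) := by rw [← pow_succ]
      have hterm1 : ‖u₀ + τ • S τ - u (t₀ + τ)‖ ≤ C1 * ((3/2) ^ (p+1) * dt ^ (p+1)) := by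
        calc ‖u₀ + τ • S τ - u (t₀ + τ)‖ ≤ C1 * τ ^ (p+1) := h1
          _ ≤ C1 * ((3/2) ^ (p+1) * dt ^ (p+1)) := by
              apply mul_le_mul_of_nonneg_left _ (le_of_lt hC1)
              rw [← mul_pow]
              exact pow_le_pow_left₀ (le_of_lt hτ0) hτle _
      calc ‖(u₀ + τ • S τ - u (t₀ + τ)) + τ • (S dt - S τ)‖
          ≤ ‖u₀ + τ • S τ - u (t₀ + τ)‖ + ‖τ • (S dt - S τ)‖ := norm_add_le _ _
        _ ≤ C1 * ((3/2) ^ (p+1) * dt ^ (p+1)) + (3/2) * (K:ℝ) * C₀ * dt ^ (p+1) :=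
            add_le_add hterm1 hterm2
        _ ≤ (C1 * (3/2) ^ (p+1) + (3/2) * (K:ℝ) * C₀ + 1) * dt ^ (p+1) := by
            nlinarith [pow_pos hdt0 (p+1)]
end

section
/- (Corollary 2.6, IDT part.) Let (A, b) be an explicit s-stage Runge–Kutta method of order p ≥ 2 (in the sense that for every C^∞ right-hand side the one-step local error is O(Δt^{p+1})). Let f be C^∞ with f(t₀, u₀) ≠ 0 and exact solution u defined on a neighborhood of t₀. With γ(Δt) the relaxation parameter defined by the case formula, the relaxed update u¹_γ(Δt) = u₀ + γ(Δt) Δt Σⱼ bⱼ fⱼ, interpreted as an approximation to u(t₀ + Δt), has order p − 1: ‖u¹_γ(Δt) − u(t₀ + Δt)‖ = O(Δt^p) as Δt → 0⁺. -/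
set_option maxHeartbeats 1000000


open scoped RealInnerProductSpace
open Classical

/-- The embedding `(x, r) ↦ (x₁, …, xₘ, r)` as a continuous linear map. -/
noncomputable def eEmb (m : ℕ) : (EuclideanSpace ℝ (Fin m) × ℝ) →L[ℝ] EuclideanSpace ℝ (Fin (m+1)) :=
  (EuclideanSpace.equiv (Fin (m+1)) ℝ).symm.toContinuousLinearMap.comp
    (ContinuousLinearMap.pi (fun i : Fin (m+1) =>
      Fin.lastCases (ContinuousLinearMap.snd ℝ (EuclideanSpace ℝ (Fin m)) ℝ)
        (fun j => (ContinuousLinearMap.proj j).comp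
          ((EuclideanSpace.equiv (Fin m) ℝ).toContinuousLinearMap.comp
            (ContinuousLinearMap.fst ℝ (EuclideanSpace ℝ (Fin m)) ℝ))) i))

/-- The projection onto the first `m` coordinates as a continuous linear map. -/
noncomputable def eProj (m : ℕ) : EuclideanSpace ℝ (Fin (m+1)) →L[ℝ] EuclideanSpace ℝ (Fin m) :=
  (EuclideanSpace.equiv (Fin m) ℝ).symm.toContinuousLinearMap.comp
    ((ContinuousLinearMap.pi (fun i : Fin m => ContinuousLinearMap.proj i.castSucc)).comp
      (EuclideanSpace.equiv (Fin (m+1)) ℝ).toContinuousLinearMap)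

/-- The last coordinate as a continuous linear map. -/
noncomputable def eLast (m : ℕ) : EuclideanSpace ℝ (Fin (m+1)) →L[ℝ] ℝ :=
  (ContinuousLinearMap.proj (Fin.last m)).comp
    (EuclideanSpace.equiv (Fin (m+1)) ℝ).toContinuousLinearMap

lemma eEmb_apply (m : ℕ) (x : EuclideanSpace ℝ (Fin m)) (r : ℝ) (i : Fin (m+1)) :
    eEmb m (x, r) i = Fin.lastCases r (fun j => x j) i := by
  induction i using Fin.lastCases with
  | last => simp [eEmb]
  | cast j => simp [eEmb]

lemma eProj_apply (m : ℕ) (w : EuclideanSpace ℝ (Fin (m+1))) (i : Fin m) :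
    eProj m w i = w i.castSucc := rfl

lemma eLast_apply (m : ℕ) (w : EuclideanSpace ℝ (Fin (m+1))) :
    eLast m w = w (Fin.last m) := rfl

lemma eProj_eEmb (m : ℕ) (x : EuclideanSpace ℝ (Fin m)) (r : ℝ) :
    eProj m (eEmb m (x, r)) = x := by
  ext i
  rw [eProj_apply, eEmb_apply]
  simp

lemma eLast_eEmb (m : ℕ) (x : EuclideanSpace ℝ (Fin m)) (r : ℝ) :
    eLast m (eEmb m (x, r)) = r := by
  rw [eLast_apply, eEmb_apply]
  simp

lemma abs_coord_le (n : ℕ) (x : EuclideanSpace ℝ (Fin n)) (i : Fin n) : |x i| ≤ ‖x‖ := by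
  have h2 : |x i| = Real.sqrt (‖x i‖^2) := by
    rw [Real.norm_eq_abs, Real.sqrt_sq_eq_abs, abs_abs]
  rw [EuclideanSpace.norm_eq x, h2]
  apply Real.sqrt_le_sqrt
  exact Finset.single_le_sum (f := fun j => ‖x j‖^2) (fun j _ => by positivity) (Finset.mem_univ i)

lemma abs_eLast_le (m : ℕ) (w : EuclideanSpace ℝ (Fin (m+1))) : |eLast m w| ≤ ‖w‖ := by
  rw [eLast_apply]
  exact abs_coord_le _ w _

lemma rk_weights_sum {s p : ℕ} (A : Fin s → Fin s → ℝ) (b : Fin s → ℝ)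
    (hp : 1 ≤ p) (horder : RKHasOrder A b p) : ∑ j, b j = 1 := by
  set e : EuclideanSpace ℝ (Fin 1) := EuclideanSpace.single 0 1 with he
  have hne : ‖e‖ = 1 := by simp [he, EuclideanSpace.norm_single]
  obtain ⟨C, δ, hC, hδ, h⟩ := horder 1 (fun _ _ => e) contDiff_const 0 0
    (fun _ _ => e) (fun dt i => by simp) (fun t => t • e) 1 one_pos
    (fun t _ => by
      simpa using (hasDerivAt_id t).smul_const e)
    (by simp)
  by_contra hnee
  set a := |∑ j, b j - 1| with ha
  have ha0 : 0 < a := abs_pos.2 (sub_ne_zero.2 hnee)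
  set dt := min (δ/2) (min 1 (a/(2*C))) with hdt
  have hdt0 : 0 < dt := by
    apply lt_min (by linarith) (lt_min one_pos (by positivity))
  have hdtδ : dt < δ := lt_of_le_of_lt (min_le_left _ _) (by linarith)
  have hdt1 : dt ≤ 1 := le_trans (min_le_right _ _) (min_le_left _ _)
  have hdta : dt ≤ a/(2*C) := le_trans (min_le_right _ _) (min_le_right _ _)
  have hkey := h dt ⟨hdt0, hdtδ⟩
  have hlhs : ‖(0 : EuclideanSpace ℝ (Fin 1)) + dt • ∑ j, b j • e - (0 + dt) • e‖
      = dt * a := by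
    have : (0 : EuclideanSpace ℝ (Fin 1)) + dt • ∑ j, b j • e - (0 + dt) • e
        = (dt * ((∑ j, b j) - 1)) • e := by
      rw [← Finset.sum_smul]
      module
    rw [this, norm_smul, hne]
    simp [abs_of_pos hdt0, mul_assoc, ha, abs_mul]
  rw [hlhs] at hkey
  have h2 : a ≤ C * dt ^ p := by
    have hpow : dt ^ (p + 1) = dt * dt ^ p := by ring
    rw [hpow, ← mul_assoc, mul_comm C dt, mul_assoc] at hkey
    exact le_of_mul_le_mul_left hkey hdt0
  have h3 : dt ^ p ≤ dt := by
    calc dt ^ p ≤ dt ^ 1 := pow_le_pow_of_le_one (le_of_lt hdt0) hdt1 hp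
    _ = dt := pow_one dt
  have h4 : a ≤ C * (a / (2*C)) := le_trans h2 (by
    apply mul_le_mul_of_nonneg_left (le_trans h3 hdta) (le_of_lt hC))
  rw [mul_div_assoc'] at h4
  have heq : C * a / (2 * C) = a / 2 := by
    field_simp
  rw [heq] at h4
  linarith

lemma stage_continuous {s m : ℕ} (A : Fin s → Fin s → ℝ)
    (hA : ∀ i j : Fin s, (i : ℕ) ≤ (j : ℕ) → A i j = 0)
    (f : ℝ → EuclideanSpace ℝ (Fin m) → EuclideanSpace ℝ (Fin m))
    (hf : ContDiff ℝ (⊤ : ℕ∞) (Function.uncurry f))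
    (t₀ : ℝ) (u₀ : EuclideanSpace ℝ (Fin m))
    (F : ℝ → Fin s → EuclideanSpace ℝ (Fin m))
    (hF : ∀ dt i, F dt i =
      f (t₀ + (∑ j, A i j) * dt) (u₀ + dt • ∑ j, A i j • F dt j)) :
    ∀ i, ContinuousAt (fun dt => F dt i) 0 := by
  suffices h : ∀ n (i : Fin s), (i : ℕ) < n → ContinuousAt (fun dt => F dt i) 0 by
    exact fun i => h (i + 1) i (Nat.lt_succ_self _)
  intro n
  induction n with
  | zero => exact fun i hi => absurd hi (Nat.not_lt_zero _)
  | succ n ih =>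
    intro i hi
    have heq : (fun dt => F dt i)
        = fun dt => f (t₀ + (∑ j, A i j) * dt) (u₀ + dt • ∑ j, A i j • F dt j) :=
      funext fun dt => hF dt i
    rw [heq]
    have hsum : ContinuousAt (fun dt => ∑ j, A i j • F dt j) 0 := by
      apply tendsto_finset_sum
      intro j _
      by_cases hij : (i : ℕ) ≤ (j : ℕ)
      · simp only [hA i j hij, zero_smul]
        exact continuousAt_const
      · push_neg at hij
        have : (j : ℕ) < n := lt_of_lt_of_le hij (Nat.lt_succ_iff.mp hi)
        exact (ih j this).const_smul (A i j)
    have hpair : ContinuousAt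
        (fun dt : ℝ => ((t₀ + (∑ j, A i j) * dt, u₀ + dt • ∑ j, A i j • F dt j) :
          ℝ × EuclideanSpace ℝ (Fin m))) 0 :=
      (continuousAt_const.add (continuousAt_const.mul continuousAt_id)).prodMk
        (continuousAt_const.add (continuousAt_id.smul hsum))
    exact (hf.continuous.continuousAt).comp hpair

/-- Corollary 2.6, IDT part.  Let `(A, b)` be an explicit `s`-stage
Runge–Kutta method of order `p ≥ 2`, let `f` be `C^∞` with `f(t₀, u₀) ≠ 0` and exact
solution `u` defined on a neighborhood of `t₀`.  With `γ(dt)` the relaxation parameter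
defined by the case formula, the relaxed update
`u¹_γ(dt) = u₀ + γ(dt) dt ∑ⱼ bⱼ fⱼ`, interpreted as an approximation to `u(t₀ + dt)`,
has order `p − 1`: `‖u¹_γ(dt) − u(t₀ + dt)‖ = O(dt^p)` as `dt → 0⁺`. -/
theorem rrk_idt_order_cor
    {s m p : ℕ} (A : Fin s → Fin s → ℝ) (b : Fin s → ℝ)
    (hA : ∀ i j : Fin s, (i : ℕ) ≤ (j : ℕ) → A i j = 0)
    (hp : 2 ≤ p)
    (horder : RKHasOrder A b p)
    (f : ℝ → EuclideanSpace ℝ (Fin m) → EuclideanSpace ℝ (Fin m))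
    (hf : ContDiff ℝ (⊤ : ℕ∞) (Function.uncurry f))
    (t₀ : ℝ) (u₀ : EuclideanSpace ℝ (Fin m))
    (hf0 : f t₀ u₀ ≠ 0)
    (F : ℝ → Fin s → EuclideanSpace ℝ (Fin m))
    (hF : ∀ dt i, F dt i =
      f (t₀ + (∑ j, A i j) * dt) (u₀ + dt • ∑ j, A i j • F dt j))
    (u : ℝ → EuclideanSpace ℝ (Fin m)) (ε : ℝ) (hε : 0 < ε)
    (hu : ∀ t ∈ Set.Ioo (t₀ - ε) (t₀ + ε), HasDerivAt u (f t (u t)) t)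
    (hu₀ : u t₀ = u₀) :
    ∃ C δ : ℝ, 0 < C ∧ 0 < δ ∧
      ∀ dt ∈ Set.Ioo (0 : ℝ) δ,
        ‖u₀ + (RKGamma A b F dt * dt) • ∑ j, b j • F dt j - u (t₀ + dt)‖
          ≤ C * dt ^ p := by
  classical
  obtain ⟨q, rfl⟩ : ∃ q, p = q + 2 := ⟨p - 2, by omega⟩
  have hb1 : ∑ j, b j = 1 := rk_weights_sum A b (by omega) horder
  have hF0 : ∀ i, F 0 i = f t₀ u₀ := fun i => by simpa using hF 0 i
  have hFc : ∀ i, ContinuousAt (fun dt => F dt i) 0 := stage_continuous A hA f hf t₀ u₀ F hF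
  have hf₀ : 0 < ‖f t₀ u₀‖ := norm_pos_iff.2 hf0
  -- continuity of the weighted sum of stage derivatives at dt = 0
  have hSc : ContinuousAt (fun dt => ∑ j, b j • F dt j) 0 :=
    tendsto_finset_sum _ (fun j _ => (hFc j).const_smul (b j))
  have hS0 : ∑ j, b j • F 0 j = f t₀ u₀ := by
    simp only [hF0]
    rw [← Finset.sum_smul, hb1, one_smul]
  obtain ⟨δS, hδS, hSnear⟩ := Metric.continuousAt_iff.mp hSc (‖f t₀ u₀‖/2) (by positivity)
  -- continuity of the exact solution at t₀
  have hucont : ContinuousAt u t₀ := (hu t₀ ⟨by linarith, by linarith⟩).continuousAt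
  obtain ⟨δu, hδu, hunear⟩ := Metric.continuousAt_iff.mp hucont 1 one_pos
  -- order hypothesis applied to the original system
  obtain ⟨C₂, δ₂, hC₂, hδ₂, h₂⟩ := horder m f hf t₀ u₀ F hF u ε hε hu hu₀
  -- the augmented system
  have hg : ContDiff ℝ (⊤ : ℕ∞) (Function.uncurry
      (fun t w => eEmb m (f t (eProj m w), 2 * ⟪eProj m w, f t (eProj m w)⟫))) := by
    have h1 : ContDiff ℝ (⊤ : ℕ∞) (fun qq : ℝ × EuclideanSpace ℝ (Fin (m+1)) =>
        f qq.1 (eProj m qq.2)) :=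
      hf.comp (contDiff_fst.prodMk ((eProj m).contDiff.comp contDiff_snd))
    have h2 : ContDiff ℝ (⊤ : ℕ∞) (fun qq : ℝ × EuclideanSpace ℝ (Fin (m+1)) => eProj m qq.2) :=
      (eProj m).contDiff.comp contDiff_snd
    have h3 : ContDiff ℝ (⊤ : ℕ∞) (fun qq : ℝ × EuclideanSpace ℝ (Fin (m+1)) =>
        (2:ℝ) * ⟪eProj m qq.2, f qq.1 (eProj m qq.2)⟫) :=
      contDiff_const.mul (h2.inner ℝ h1)
    exact (eEmb m).contDiff.comp (h1.prodMk h3)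
  have hproj : ∀ (dt : ℝ) (i : Fin s),
      eProj m (eEmb m (u₀, ‖u₀‖^2) + dt • ∑ j, A i j •
        eEmb m (F dt j, 2 * ⟪u₀ + dt • ∑ k, A j k • F dt k, F dt j⟫))
      = u₀ + dt • ∑ j, A i j • F dt j := by
    intro dt i
    rw [map_add, map_smul, map_sum]
    simp only [map_smul, eProj_eEmb]
  have hG : ∀ dt i,
      (fun dt i => eEmb m (F dt i, 2 * ⟪u₀ + dt • ∑ k, A i k • F dt k, F dt i⟫)) dt i
      = (fun t w => eEmb m (f t (eProj m w), 2 * ⟪eProj m w, f t (eProj m w)⟫))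
          (t₀ + (∑ j, A i j) * dt)
          (eEmb m (u₀, ‖u₀‖^2) + dt • ∑ j, A i j •
            (fun dt i => eEmb m (F dt i, 2 * ⟪u₀ + dt • ∑ k, A i k • F dt k, F dt i⟫)) dt j) := by
    intro dt i
    simp only []
    rw [hproj dt i, ← hF dt i]
  have hw : ∀ t ∈ Set.Ioo (t₀ - ε) (t₀ + ε),
      HasDerivAt (fun t => eEmb m (u t, ‖u t‖^2))
        ((fun t w => eEmb m (f t (eProj m w), 2 * ⟪eProj m w, f t (eProj m w)⟫)) t
          ((fun t => eEmb m (u t, ‖u t‖^2)) t)) t := by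
    intro t ht
    have hd1 := hu t ht
    have hd2 : HasDerivAt (fun t => ‖u t‖^2) (2 * ⟪u t, f t (u t)⟫) t := by
      have h := hd1.inner ℝ hd1
      have heq : (fun t => (⟪u t, u t⟫ : ℝ)) = fun t => ‖u t‖^2 :=
        funext fun t => real_inner_self_eq_norm_sq (u t)
      rw [heq] at h
      rw [real_inner_comm (u t) (f t (u t)), ← two_mul] at h
      exact h
    have hpair : HasDerivAt (fun t => ((u t, ‖u t‖^2) : EuclideanSpace ℝ (Fin m) × ℝ))
        (f t (u t), 2 * ⟪u t, f t (u t)⟫) t := hd1.prodMk hd2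
    have hcomp := (eEmb m).hasFDerivAt.comp_hasDerivAt t hpair
    simp only [eProj_eEmb]
    exact hcomp
  have hw0 : (fun t => eEmb m (u t, ‖u t‖^2)) t₀ = eEmb m (u₀, ‖u₀‖^2) := by simp only [hu₀]
  obtain ⟨C₁, δ₁, hC₁, hδ₁, h₁⟩ := horder (m+1)
    (fun t w => eEmb m (f t (eProj m w), 2 * ⟪eProj m w, f t (eProj m w)⟫))
    hg t₀ (eEmb m (u₀, ‖u₀‖^2))
    (fun dt i => eEmb m (F dt i, 2 * ⟪u₀ + dt • ∑ k, A i k • F dt k, F dt i⟫))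
    hG (fun t => eEmb m (u t, ‖u t‖^2)) ε hε hw hw0
  -- constants
  set M : ℝ := (‖u₀‖ + 2*‖f t₀ u₀‖) + (‖u₀‖ + 1) with hM
  have hM0 : 0 < M := by positivity
  set K : ℝ := C₁ + C₂ * M with hK
  have hK0 : 0 < K := by positivity
  refine ⟨C₂ + 6*K/‖f t₀ u₀‖, min (min δ₁ δ₂) (min (min δS δu) 1), by positivity,
    lt_min (lt_min hδ₁ hδ₂) (lt_min (lt_min hδS hδu) one_pos), ?_⟩
  rintro dt ⟨hdt0, hdtlt⟩
  have hdtδ₁ : dt < δ₁ := lt_of_lt_of_le hdtlt (le_trans (min_le_left _ _) (min_le_left _ _))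
  have hdtδ₂ : dt < δ₂ := lt_of_lt_of_le hdtlt (le_trans (min_le_left _ _) (min_le_right _ _))
  have hdtδS : dt < δS := lt_of_lt_of_le hdtlt
    (le_trans (min_le_right _ _) (le_trans (min_le_left _ _) (min_le_left _ _)))
  have hdtδu : dt < δu := lt_of_lt_of_le hdtlt
    (le_trans (min_le_right _ _) (le_trans (min_le_left _ _) (min_le_right _ _)))
  have hdt1 : dt ≤ 1 := le_of_lt (lt_of_lt_of_le hdtlt
    (le_trans (min_le_right _ _) (min_le_right _ _)))
  -- bounds on S dt
  have hSd : ‖(∑ j, b j • F dt j) - f t₀ u₀‖ < ‖f t₀ u₀‖/2 := by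
    have := hSnear (x := dt) (by simpa [Real.dist_eq, abs_of_pos hdt0] using hdtδS)
    rw [hS0] at this
    simpa [dist_eq_norm] using this
  have hS_up : ‖∑ j, b j • F dt j‖ ≤ 3/2 * ‖f t₀ u₀‖ := by
    have := norm_sub_norm_le (∑ j, b j • F dt j) (f t₀ u₀)
    linarith [le_of_lt hSd, this]
  have hS_lo : ‖f t₀ u₀‖/2 ≤ ‖∑ j, b j • F dt j‖ := by
    have := norm_sub_norm_le (f t₀ u₀) (∑ j, b j • F dt j)
    rw [norm_sub_rev] at this
    linarith [le_of_lt hSd]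
  have hSne : (∑ j, b j • F dt j) ≠ 0 := by
    intro h0
    rw [h0, norm_zero] at hS_lo
    linarith
  -- bound on the exact solution
  have huB : ‖u (t₀ + dt)‖ ≤ ‖u₀‖ + 1 := by
    have := hunear (x := t₀ + dt) (by
      simp only [Real.dist_eq, add_sub_cancel_left]
      rwa [abs_of_pos hdt0])
    rw [hu₀, dist_eq_norm] at this
    have h := norm_sub_norm_le (u (t₀ + dt)) u₀
    linarith
  -- bound on the numerical solution
  have hu1B : ‖u₀ + dt • ∑ j, b j • F dt j‖ ≤ ‖u₀‖ + 2*‖f t₀ u₀‖ := by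
    calc ‖u₀ + dt • ∑ j, b j • F dt j‖ ≤ ‖u₀‖ + ‖dt • ∑ j, b j • F dt j‖ := norm_add_le _ _
    _ = ‖u₀‖ + dt * ‖∑ j, b j • F dt j‖ := by rw [norm_smul, Real.norm_eq_abs, abs_of_pos hdt0]
    _ ≤ ‖u₀‖ + 1 * (3/2 * ‖f t₀ u₀‖) := by
        have := mul_le_mul hdt1 hS_up (norm_nonneg _) zero_le_one
        linarith
    _ ≤ ‖u₀‖ + 2*‖f t₀ u₀‖ := by linarith
  -- scalar quantities
  set P : ℝ := ∑ j, b j * ⟪u₀, F dt j⟫ with hP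
  set Q : ℝ := ∑ i, ∑ j, b i * A i j * ⟪F dt i, F dt j⟫ with hQ
  -- the inner products with the stage values
  have hyexp : ∀ j : Fin s, (⟪u₀ + dt • ∑ k, A j k • F dt k, F dt j⟫ : ℝ)
      = ⟪u₀, F dt j⟫ + dt * ∑ k, A j k * ⟪F dt k, F dt j⟫ := by
    intro j
    rw [inner_add_left, real_inner_smul_left, sum_inner]
    congr 1
    congr 1
    exact Finset.sum_congr rfl fun k _ => real_inner_smul_left _ _ _
  -- last coordinate of the augmented update
  have hE1val : eLast m (eEmb m (u₀, ‖u₀‖^2) + dt • ∑ j, b j •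
        eEmb m (F dt j, 2 * ⟪u₀ + dt • ∑ k, A j k • F dt k, F dt j⟫))
      = ‖u₀‖^2 + 2*dt*P + 2*dt^2*Q := by
    rw [map_add, map_smul, map_sum]
    simp only [map_smul, eLast_eEmb]
    rw [smul_eq_mul]
    have hterm : ∀ j : Fin s, b j • (2 * ⟪u₀ + dt • ∑ k, A j k • F dt k, F dt j⟫)
        = 2 * (b j * ⟪u₀, F dt j⟫) + 2 * dt * ∑ k, b j * A j k * ⟪F dt j, F dt k⟫ := by
      intro j
      rw [smul_eq_mul, hyexp j]
      have hsum2 : ∑ k, b j * A j k * ⟪F dt j, F dt k⟫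
          = b j * ∑ k, A j k * ⟪F dt k, F dt j⟫ := by
        rw [Finset.mul_sum]
        exact Finset.sum_congr rfl fun k _ => by
          rw [real_inner_comm (F dt j) (F dt k)]; ring
      rw [hsum2]
      ring
    rw [Finset.sum_congr rfl (fun j _ => hterm j), Finset.sum_add_distrib]
    rw [← Finset.mul_sum, ← Finset.mul_sum]
    rw [← hP, ← hQ]
    ring
  -- the squared norm of the unrelaxed update
  have hu1sq : ‖u₀ + dt • ∑ j, b j • F dt j‖^2
      = ‖u₀‖^2 + 2*dt*P + dt^2*‖∑ j, b j • F dt j‖^2 := by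
    rw [norm_add_sq_real, real_inner_smul_right, norm_smul, Real.norm_eq_abs, mul_pow, sq_abs]
    have : (⟪u₀, ∑ j, b j • F dt j⟫ : ℝ) = P := by
      rw [hP, inner_sum]
      exact Finset.sum_congr rfl fun j _ => real_inner_smul_right _ _ _
    rw [this]
    ring
  -- the two error bounds
  have hb₁ := h₁ dt ⟨hdt0, hdtδ₁⟩
  have hb₂ := h₂ dt ⟨hdt0, hdtδ₂⟩
  -- extract scalar bound from the augmented system
  have hE1 : |(‖u₀‖^2 + 2*dt*P + 2*dt^2*Q) - ‖u (t₀ + dt)‖^2| ≤ C₁ * dt^(q+2+1) := by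
    have hcl := abs_eLast_le m
      ((eEmb m (u₀, ‖u₀‖^2) + dt • ∑ j, b j •
        eEmb m (F dt j, 2 * ⟪u₀ + dt • ∑ k, A j k • F dt k, F dt j⟫))
        - eEmb m (u (t₀ + dt), ‖u (t₀ + dt)‖^2))
    rw [map_sub, hE1val, eLast_eEmb] at hcl
    exact le_trans hcl hb₁
  -- difference of squared norms bound
  have hsqd : |‖u₀ + dt • ∑ j, b j • F dt j‖^2 - ‖u (t₀ + dt)‖^2|
      ≤ C₂ * dt^(q+2+1) * M := by
    have h5 : |‖u₀ + dt • ∑ j, b j • F dt j‖ - ‖u (t₀ + dt)‖|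
        ≤ ‖u₀ + dt • ∑ j, b j • F dt j - u (t₀ + dt)‖ :=
      abs_norm_sub_norm_le _ _
    have h6 : ‖u₀ + dt • ∑ j, b j • F dt j‖ + ‖u (t₀ + dt)‖ ≤ M := by
      rw [hM]; linarith
    calc |‖u₀ + dt • ∑ j, b j • F dt j‖^2 - ‖u (t₀ + dt)‖^2|
        = |‖u₀ + dt • ∑ j, b j • F dt j‖ - ‖u (t₀ + dt)‖|
          * (‖u₀ + dt • ∑ j, b j • F dt j‖ + ‖u (t₀ + dt)‖) := by
          rw [← abs_of_nonneg (by positivity :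
            (0:ℝ) ≤ ‖u₀ + dt • ∑ j, b j • F dt j‖ + ‖u (t₀ + dt)‖), ← abs_mul]
          congr 1
          ring
    _ ≤ ‖u₀ + dt • ∑ j, b j • F dt j - u (t₀ + dt)‖ * M :=
          mul_le_mul h5 h6 (by positivity) (norm_nonneg _)
    _ ≤ C₂ * dt^(q+2+1) * M := mul_le_mul_of_nonneg_right hb₂ (le_of_lt hM0)
  -- the key cancellation
  have hkey : |2*Q - ‖∑ j, b j • F dt j‖^2| ≤ K * dt^(q+1) := by
    have hdiff : (‖u₀‖^2 + 2*dt*P + 2*dt^2*Q) - ‖u₀ + dt • ∑ j, b j • F dt j‖^2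
        = dt^2 * (2*Q - ‖∑ j, b j • F dt j‖^2) := by
      rw [hu1sq]; ring
    have htri : |(‖u₀‖^2 + 2*dt*P + 2*dt^2*Q) - ‖u₀ + dt • ∑ j, b j • F dt j‖^2|
        ≤ K * dt^(q+2+1) := by
      calc |(‖u₀‖^2 + 2*dt*P + 2*dt^2*Q) - ‖u₀ + dt • ∑ j, b j • F dt j‖^2|
          ≤ |(‖u₀‖^2 + 2*dt*P + 2*dt^2*Q) - ‖u (t₀ + dt)‖^2|
            + |‖u₀ + dt • ∑ j, b j • F dt j‖^2 - ‖u (t₀ + dt)‖^2| := by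
            rw [abs_sub_comm (‖u₀ + dt • ∑ j, b j • F dt j‖^2) (‖u (t₀ + dt)‖^2)]
            exact abs_sub_le _ _ _
      _ ≤ C₁ * dt^(q+2+1) + C₂ * dt^(q+2+1) * M := add_le_add hE1 hsqd
      _ = K * dt^(q+2+1) := by rw [hK]; ring
    rw [hdiff, abs_mul, abs_of_nonneg (by positivity : (0:ℝ) ≤ dt^2)] at htri
    have hpw : dt^(q+2+1) = dt^2 * dt^(q+1) := by ring
    rw [hpw, ← mul_assoc, mul_comm K (dt^2), mul_assoc] at htri
    exact le_of_mul_le_mul_left htri (by positivity)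
  -- gamma
  have hγ : RKGamma A b F dt = (2*Q) / ‖∑ j, b j • F dt j‖^2 := by
    rw [RKGamma, if_neg hSne, hQ]
  have hSpos : (0:ℝ) < ‖∑ j, b j • F dt j‖ := lt_of_lt_of_le (by positivity) hS_lo
  have hden : (0:ℝ) < ‖∑ j, b j • F dt j‖^2 := pow_pos hSpos 2
  have hγ1 : |RKGamma A b F dt - 1| ≤ K * dt^(q+1) / (‖f t₀ u₀‖^2/4) := by
    rw [hγ]
    have : (2*Q) / ‖∑ j, b j • F dt j‖^2 - 1
        = (2*Q - ‖∑ j, b j • F dt j‖^2) / ‖∑ j, b j • F dt j‖^2 := by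
      field_simp
    rw [this, abs_div, abs_of_pos hden]
    apply div_le_div₀ (by positivity) hkey (div_pos (pow_pos hf₀ 2) four_pos)
    nlinarith [hS_lo, hf₀, norm_nonneg (∑ j, b j • F dt j)]
  -- final estimate
  have hsplit : u₀ + (RKGamma A b F dt * dt) • ∑ j, b j • F dt j - u (t₀ + dt)
      = (u₀ + dt • ∑ j, b j • F dt j - u (t₀ + dt))
        + ((RKGamma A b F dt - 1) * dt) • ∑ j, b j • F dt j := by
    module
  rw [hsplit]
  have hsecond : ‖((RKGamma A b F dt - 1) * dt) • ∑ j, b j • F dt j‖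
      ≤ 6*K/‖f t₀ u₀‖ * dt^(q+2) := by
    rw [norm_smul, Real.norm_eq_abs, abs_mul, abs_of_pos hdt0]
    have t1 : |RKGamma A b F dt - 1| * dt ≤ (K * dt^(q+1) / (‖f t₀ u₀‖^2/4)) * dt :=
      mul_le_mul_of_nonneg_right hγ1 hdt0.le
    have t2 : |RKGamma A b F dt - 1| * dt * ‖∑ j, b j • F dt j‖
        ≤ (K * dt^(q+1) / (‖f t₀ u₀‖^2/4)) * dt * (3/2 * ‖f t₀ u₀‖) :=
      mul_le_mul t1 hS_up (norm_nonneg _) (by positivity)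
    have heq : K * dt^(q+1) / (‖f t₀ u₀‖^2/4) * dt * (3/2 * ‖f t₀ u₀‖)
        = 6*K/‖f t₀ u₀‖ * dt^(q+2) := by
      have h0 : ‖f t₀ u₀‖ ≠ 0 := ne_of_gt hf₀
      field_simp
      ring
    rw [heq] at t2
    rw [mul_assoc] at t2 ⊢
    exact t2
  have hfirst : ‖u₀ + dt • ∑ j, b j • F dt j - u (t₀ + dt)‖ ≤ C₂ * dt^(q+2) := by
    refine le_trans hb₂ ?_
    apply mul_le_mul_of_nonneg_left ?_ hC₂.le
    exact pow_le_pow_of_le_one hdt0.le hdt1 (by omega)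
  calc ‖(u₀ + dt • ∑ j, b j • F dt j - u (t₀ + dt))
        + ((RKGamma A b F dt - 1) * dt) • ∑ j, b j • F dt j‖
      ≤ ‖u₀ + dt • ∑ j, b j • F dt j - u (t₀ + dt)‖
        + ‖((RKGamma A b F dt - 1) * dt) • ∑ j, b j • F dt j‖ := norm_add_le _ _
  _ ≤ C₂ * dt^(q+2) + 6*K/‖f t₀ u₀‖ * dt^(q+2) := add_le_add hfirst hsecond
  _ = (C₂ + 6*K/‖f t₀ u₀‖) * dt^(q+2) := by ring
end

section
/- (Imaginary-axis stability of relaxed methods.) Let p ≥ 2, let s ≥ p, and let α₁,…,α_s be real coefficients with α_k = 1/k! for 1 ≤ k ≤ p (the stability polynomial of a method of order at least p). For every γ with 0 ≤ γ < 1 there exists ε > 0 such that |R_γ(iy)| ≤ 1 for all real y with |y| ≤ ε; i.e., the relaxed stability region contains a segment of the imaginary axis containing z = 0. -/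
/-!
Since `α₁ = 1` and `α₂ = 1/2`, on the imaginary axis `∑ α_k (iy)^k = y (i + y T(y))` with
`T` continuous and `T(0) = -1/2`. Hence `|R_γ(iy)|² = 1 + y² (2γ Re T(y) + γ² |i + y T(y)|²)`,
and the bracket tends to `γ² - γ < 0` as `y → 0`.
-/

open Complex Filter Finset Topology

noncomputable def stabilityTail (s : ℕ) (α : ℕ → ℝ) (y : ℝ) : ℂ :=
  ∑ k ∈ Icc 2 s, (α k : ℂ) * I ^ k * (y : ℂ) ^ (k - 2)

theorem continuous_stabilityTail (s : ℕ) (α : ℕ → ℝ) : Continuous (stabilityTail s α) :=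
  continuous_finsetSum _ fun _ _ => continuous_const.mul (continuous_ofReal.pow _)

theorem stabilityTail_zero {s : ℕ} (hs : 2 ≤ s) (α : ℕ → ℝ) :
    stabilityTail s α 0 = -(α 2 : ℂ) := by
  rw [stabilityTail, sum_eq_single_of_mem 2 (mem_Icc.mpr ⟨le_rfl, hs⟩)]
  · simp [I_sq]
  · intro k hk hk2
    have : k - 2 ≠ 0 := by rw [mem_Icc] at hk; omega
    simp [this]

theorem sum_Icc_one_mul_I_pow_eq {s : ℕ} (hs : 2 ≤ s) {α : ℕ → ℝ} (hα₁ : α 1 = 1)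
    (y : ℝ) :
    ∑ k ∈ Icc 1 s, (α k : ℂ) * (I * y) ^ k = y * (I + y * stabilityTail s α y) := by
  have hIcc : Icc 1 s = insert 1 (Icc 2 s) := by
    ext k; simp only [mem_Icc, mem_insert]; omega
  have hterm : ∀ k ∈ Icc 2 s,
      (α k : ℂ) * (I * y) ^ k = (α k : ℂ) * I ^ k * (y : ℂ) ^ (k - 2) * (y : ℂ) ^ 2 := by
    intro k hk
    rw [mul_pow, mul_assoc, ← pow_add, Nat.sub_add_cancel (mem_Icc.mp hk).1, mul_assoc]
  rw [hIcc, sum_insert (by simp), sum_congr rfl hterm, ← sum_mul, hα₁, stabilityTail]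
  push_cast
  ring

theorem normSq_one_add_mul_mul_I_add_mul (γ y : ℝ) (w : ℂ) :
    normSq (1 + γ * (y * (I + y * w))) =
      1 + y ^ 2 * (2 * γ * w.re + γ ^ 2 * normSq (I + y * w)) := by
  rw [show (1 : ℂ) + γ * (y * (I + y * w)) = 1 + ((γ * y : ℝ) : ℂ) * (I + y * w) by
      push_cast; ring,
    normSq_add, normSq_mul, normSq_ofReal]
  simp only [map_one, one_mul, mul_re, ofReal_re, ofReal_im, add_re, add_im, I_re, I_im,
    conj_re, mul_im]
  ring

theorem eventually_norm_one_add_mul_mul_I_add_mul_le_one {T : ℝ → ℂ} (hT : ContinuousAt T 0)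
    {γ : ℝ} (hγ₀ : 0 ≤ γ) (hγ : γ < -2 * (T 0).re) :
    ∀ᶠ y in 𝓝 0, ‖1 + γ * (y * (I + y * T y))‖ ≤ 1 := by
  rcases hγ₀.eq_or_lt with rfl | hγ₀
  · simp
  set g : ℝ → ℝ := fun y => 2 * γ * (T y).re + γ ^ 2 * normSq (I + y * T y)
  have hg : ContinuousAt g 0 := by fun_prop
  have hg₀ : g 0 < 0 := by
    have : g 0 = γ * (γ + 2 * (T 0).re) := by simp [g]; ring
    rw [this]
    exact mul_neg_of_pos_of_neg hγ₀ (by linarith)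
  filter_upwards [hg.eventually_lt_const hg₀] with y hy
  rw [← sq_le_one_iff₀ (norm_nonneg _), ← normSq_eq_norm_sq, normSq_one_add_mul_mul_I_add_mul]
  nlinarith [sq_nonneg y]

/-- imaginary-axis stability of relaxed methods.  Let `p ≥ 2`,
`s ≥ p`, and let `α₁, …, α_s` be real coefficients with `α_k = 1/k!` for `1 ≤ k ≤ p`
(the stability polynomial `R_γ(z) = 1 + γ ∑_{k=1}^s α_k z^k` of a method of order at
least `p`).  For every `γ` with `0 ≤ γ < 1` there exists `ε > 0` such that
`|R_γ(iy)| ≤ 1` for all real `y` with `|y| ≤ ε`; i.e. the relaxed stability region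
contains a segment of the imaginary axis containing `z = 0`. -/
theorem rrk_imaginary_axis_stability
    {s p : ℕ} (hp : 2 ≤ p) (hsp : p ≤ s)
    (α : ℕ → ℝ) (hα : ∀ k, 1 ≤ k → k ≤ p → α k = ((Nat.factorial k : ℝ))⁻¹)
    (γ : ℝ) (hγ0 : 0 ≤ γ) (hγ1 : γ < 1) :
    ∃ ε : ℝ, 0 < ε ∧ ∀ y : ℝ, |y| ≤ ε →
      ‖1 + (γ : ℂ) *
        ∑ k ∈ Finset.Icc 1 s, (α k : ℂ) * (Complex.I * (y : ℂ)) ^ k‖ ≤ 1 := by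
  have hs : 2 ≤ s := hp.trans hsp
  have hα₁ : α 1 = 1 := by simpa using hα 1 le_rfl (by omega)
  have hα₂ : α 2 = 1 / 2 := by norm_num [hα 2 one_le_two hp, Nat.factorial]
  have hT₀ : (stabilityTail s α 0).re = -(1 / 2) := by simp [stabilityTail_zero hs, hα₂]
  have hnear := eventually_norm_one_add_mul_mul_I_add_mul_le_one
    (continuous_stabilityTail s α).continuousAt hγ0 (by linarith)
  obtain ⟨ε, hε, hball⟩ := Metric.nhds_basis_closedBall.eventually_iff.mp hnear
  refine ⟨ε, hε, fun y hy => ?_⟩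
  rw [sum_Icc_one_mul_I_pow_eq hs hα₁]
  exact hball (by rwa [Metric.mem_closedBall, Real.dist_eq, sub_zero])
end

section
/- (Lemma 3.2.) Let A ∈ ℝ^{s×s}, b ∈ ℝ^s, r ≥ 0, and suppose the pair (A, b) is absolutely monotonic at −r and γ ≥ 0. Then the pair (A, γb) is absolutely monotonic at −r if and only if R_γ(−r) := 1 − γ r bᵀ(I + rA)^{−1} e ≥ 0. -/
open Matrix

/-- The stability function value `R(−r) = 1 − r bᵀ(I + rA)⁻¹ e` of the Runge–Kutta
pair `(A, b)` evaluated at `z = −r`. -/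
noncomputable def stabAtNeg {s : ℕ} (A : Matrix (Fin s) (Fin s) ℝ) (b : Fin s → ℝ)
    (r : ℝ) : ℝ :=
  1 - r * (b ⬝ᵥ ((1 + r • A)⁻¹ *ᵥ fun _ => (1 : ℝ)))

/-- The pair `(A, b)` is absolutely monotonic at `−r` (for `r ≥ 0`, with `I + rA`
invertible) if every entry of `A(I + rA)⁻¹`, of `(I + rA)⁻¹ e` (`e` the all-ones
vector), and of `bᵀ(I + rA)⁻¹` is nonnegative, and in addition
`R(−r) = 1 − r bᵀ(I + rA)⁻¹ e ≥ 0`. -/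
def AbsolutelyMonotonicAt {s : ℕ} (A : Matrix (Fin s) (Fin s) ℝ) (b : Fin s → ℝ)
    (r : ℝ) : Prop :=
  IsUnit (1 + r • A) ∧
  (∀ i j, 0 ≤ (A * (1 + r • A)⁻¹) i j) ∧
  (∀ i, 0 ≤ ((1 + r • A)⁻¹ *ᵥ fun _ => (1 : ℝ)) i) ∧
  (∀ j, 0 ≤ (b ᵥ* (1 + r • A)⁻¹) j) ∧
  0 ≤ stabAtNeg A b r

/-- Lemma 3.2.  Let `(A, b)` be absolutely monotonic at `−r` and
`γ ≥ 0`.  Then `(A, γb)` is absolutely monotonic at `−r` if and only if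
`R_γ(−r) := 1 − γ r bᵀ(I + rA)⁻¹ e ≥ 0`. -/
theorem rrk_absolutely_monotonic_iff
    {s : ℕ} (A : Matrix (Fin s) (Fin s) ℝ) (b : Fin s → ℝ) (r γ : ℝ)
    (hr : 0 ≤ r) (hγ : 0 ≤ γ)
    (hab : AbsolutelyMonotonicAt A b r) :
    AbsolutelyMonotonicAt A (γ • b) r ↔
      0 ≤ 1 - γ * (r * (b ⬝ᵥ ((1 + r • A)⁻¹ *ᵥ fun _ => (1 : ℝ)))) := by
  obtain ⟨h1, h2, h3, h4, h5⟩ := hab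
  constructor
  · rintro ⟨-, -, -, -, h5'⟩
    simpa [stabAtNeg, smul_dotProduct, mul_left_comm, mul_assoc] using h5'
  · intro h
    refine ⟨h1, h2, h3, fun j => ?_, ?_⟩
    · simp only [Matrix.smul_vecMul, Pi.smul_apply, smul_eq_mul]
      exact mul_nonneg hγ (h4 j)
    · simpa [stabAtNeg, smul_dotProduct, mul_left_comm, mul_assoc] using h
end

section
/- (Theorem 3.3.) Let A ∈ ℝ^{s×s}, b ∈ ℝ^s and C > 0, and suppose (A, b) is absolutely monotonic at −t for every t ∈ [0, C]. Suppose R(−C) < 1 and set γ* = −1/(R(−C) − 1) = 1/(1 − R(−C)). Then for every γ with 0 ≤ γ ≤ γ* and every t ∈ [0, C], the pair (A, γb) is absolutely monotonic at −t; in particular the SSP coefficient satisfies C(A, γb) ≥ C(A, b). -/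
open Matrix

/-- Theorem 3.3.  Suppose `(A, b)` is absolutely monotonic at `−t`
for every `t ∈ [0, C]` (with `C > 0`), and that `R(−C) < 1`.  Set
`γ* = −1/(R(−C) − 1) = 1/(1 − R(−C))`.  Then for every `γ` with `0 ≤ γ ≤ γ*` and every
`t ∈ [0, C]`, the pair `(A, γb)` is absolutely monotonic at `−t`; in particular the
SSP coefficient satisfies `C(A, γb) ≥ C(A, b)`. -/
theorem rrk_ssp_coefficient
    {s : ℕ} (A : Matrix (Fin s) (Fin s) ℝ) (b : Fin s → ℝ) (C : ℝ) (hC : 0 < C)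
    (habs : ∀ t ∈ Set.Icc (0 : ℝ) C, AbsolutelyMonotonicAt A b t)
    (hR : stabAtNeg A b C < 1) :
    ∀ γ : ℝ, 0 ≤ γ → γ ≤ 1 / (1 - stabAtNeg A b C) →
      ∀ t ∈ Set.Icc (0 : ℝ) C, AbsolutelyMonotonicAt A (γ • b) t := by
  intro γ hγ0 hγ t ht
  obtain ⟨hut, hA, he, hb, _⟩ := habs t ht
  obtain ⟨huC, hAC, heC, hbC, _⟩ := habs C ⟨le_of_lt hC, le_refl C⟩
  set Mt := (1 + t • A)⁻¹ with hMtdef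
  set MC := (1 + C • A)⁻¹ with hMCdef
  have hdt : IsUnit (1 + t • A).det := (Matrix.isUnit_iff_isUnit_det _).mp hut
  have hdC : IsUnit (1 + C • A).det := (Matrix.isUnit_iff_isUnit_det _).mp huC
  have h1 : Mt * (1 + t • A) = 1 := Matrix.nonsing_inv_mul _ hdt
  have h2 : (1 + C • A) * MC = 1 := Matrix.mul_nonsing_inv _ hdC
  have key : C • MC - t • Mt = (C - t) • (Mt * MC) := by
    have e1 : Mt * ((C • (1 + t • A)) * MC) = C • MC := by
      rw [Matrix.smul_mul, Matrix.mul_smul, ← Matrix.mul_assoc, h1, Matrix.one_mul]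
    have e2 : Mt * ((t • (1 + C • A)) * MC) = t • Mt := by
      rw [Matrix.smul_mul, Matrix.mul_smul, h2, Matrix.mul_one]
    have e3 : C • ((1 : Matrix (Fin s) (Fin s) ℝ) + t • A) - t • (1 + C • A)
        = (C - t) • (1 : Matrix (Fin s) (Fin s) ℝ) := by
      rw [smul_add, smul_add, smul_smul, smul_smul, mul_comm C t, sub_smul]
      abel
    calc C • MC - t • Mt = Mt * ((C • (1 + t • A) - t • (1 + C • A)) * MC) := by
          rw [Matrix.sub_mul, Matrix.mul_sub, e1, e2]
      _ = (C - t) • (Mt * MC) := by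
          rw [e3, Matrix.smul_mul, Matrix.one_mul, Matrix.mul_smul]
  have hxy : t * (b ⬝ᵥ (Mt *ᵥ fun _ => (1:ℝ))) ≤ C * (b ⬝ᵥ (MC *ᵥ fun _ => (1:ℝ))) := by
    have h3 := congrArg (fun M : Matrix (Fin s) (Fin s) ℝ => b ⬝ᵥ (M *ᵥ (fun _ => (1:ℝ)))) key
    simp only [Matrix.sub_mulVec, Matrix.smul_mulVec, dotProduct_sub,
      dotProduct_smul, smul_eq_mul, ← Matrix.mulVec_mulVec] at h3
    have h4 : 0 ≤ (C - t) * (b ⬝ᵥ (Mt *ᵥ (MC *ᵥ fun _ => (1:ℝ)))) := by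
      apply mul_nonneg (by linarith [ht.2])
      rw [Matrix.dotProduct_mulVec]
      exact Finset.sum_nonneg fun j _ => mul_nonneg (hb j) (heC j)
    linarith
  refine ⟨hut, hA, he, ?_, ?_⟩
  · intro j
    rw [Matrix.smul_vecMul]
    exact mul_nonneg hγ0 (hb j)
  · have hy : (0:ℝ) < C * (b ⬝ᵥ (MC *ᵥ fun _ => (1:ℝ))) := by
      have hs : stabAtNeg A b C = 1 - C * (b ⬝ᵥ (MC *ᵥ fun _ => (1:ℝ))) := rfl
      linarith [hs ▸ hR]
    have h5 : 1 - stabAtNeg A b C = C * (b ⬝ᵥ (MC *ᵥ fun _ => (1:ℝ))) := by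
      have hs : stabAtNeg A b C = 1 - C * (b ⬝ᵥ (MC *ᵥ fun _ => (1:ℝ))) := rfl
      rw [hs]; ring
    rw [h5] at hγ
    have hγy : γ * (C * (b ⬝ᵥ (MC *ᵥ fun _ => (1:ℝ)))) ≤ 1 := (le_div_iff₀ hy).mp hγ
    have hst : stabAtNeg A (γ • b) t = 1 - γ * (t * (b ⬝ᵥ (Mt *ᵥ fun _ => (1:ℝ)))) := by
      have : stabAtNeg A (γ • b) t = 1 - t * ((γ • b) ⬝ᵥ (Mt *ᵥ fun _ => (1:ℝ))) := rfl
      rw [this, smul_dotProduct, smul_eq_mul]; ring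
    rw [hst]
    nlinarith [mul_le_mul_of_nonneg_left hxy hγ0]
end

section
/- (Key estimate in the proof of Lemma 2.5.) Let (A, b) be an explicit s-stage Runge–Kutta method of order p ≥ 2 (in the sense that for every C^∞ right-hand side the one-step local error is O(Δt^{p+1})), and let f be C^∞. Then the quantity δ(Δt) := Σ_{i=1}^s bᵢ Σ_{j=1}^s (bⱼ − 2aᵢⱼ) ⟨fᵢ, fⱼ⟩ satisfies δ(Δt) = O(Δt^{p−1}) as Δt → 0⁺; i.e., there exist C, δ₀ > 0 with |δ(Δt)| ≤ C Δt^{p−1} for all Δt ∈ (0, δ₀). -/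
open scoped RealInnerProductSpace
open Classical

noncomputable def rrkProj (m : ℕ) :
    EuclideanSpace ℝ (Fin (m+1)) →L[ℝ] EuclideanSpace ℝ (Fin m) :=
  LinearMap.toContinuousLinearMap
    { toFun := fun x => (WithLp.toLp 2 (fun i : Fin m => x i.castSucc) : EuclideanSpace ℝ (Fin m))
      map_add' := fun x y => rfl
      map_smul' := fun c x => rfl }

noncomputable def rrkIncl (m : ℕ) :
    EuclideanSpace ℝ (Fin m) →L[ℝ] EuclideanSpace ℝ (Fin (m+1)) :=
  LinearMap.toContinuousLinearMap
    { toFun := fun v => (WithLp.toLp 2 (fun j : Fin (m+1) => if h : (j : ℕ) < m then v ⟨j, h⟩ else 0) :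
        EuclideanSpace ℝ (Fin (m+1)))
      map_add' := fun x y => by
        ext j
        by_cases h : (j : ℕ) < m <;> simp [h, PiLp.add_apply]
      map_smul' := fun c x => by
        ext j
        by_cases h : (j : ℕ) < m <;> simp [h, PiLp.smul_apply] }

lemma rrkProj_incl (m : ℕ) (v : EuclideanSpace ℝ (Fin m)) :
    rrkProj m (rrkIncl m v) = v := by
  ext i
  show (if h : ((Fin.castSucc i : Fin (m+1)) : ℕ) < m then v ⟨(Fin.castSucc i : Fin (m+1)), h⟩
    else 0) = v i
  simp [rrkProj, rrkIncl, i.isLt, LinearMap.coe_toContinuousLinearMap', LinearMap.coe_mk, AddHom.coe_mk]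

lemma rrkProj_single (m : ℕ) (c : ℝ) :
    rrkProj m (EuclideanSpace.single (Fin.last m) c) = 0 := by
  ext i
  show (EuclideanSpace.single (Fin.last m) c : EuclideanSpace ℝ (Fin (m+1))) (Fin.castSucc i) = 0
  simp [rrkProj, EuclideanSpace.single_apply, (Fin.castSucc_lt_last i).ne, LinearMap.coe_toContinuousLinearMap', LinearMap.coe_mk,
    AddHom.coe_mk]

lemma rrkIncl_inner_single (m : ℕ) (v : EuclideanSpace ℝ (Fin m)) (c : ℝ) :
    ⟪rrkIncl m v, EuclideanSpace.single (Fin.last m) c⟫ = 0 := by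
  rw [EuclideanSpace.inner_single_right]
  simp [rrkIncl]

lemma rrk_inner_e (m : ℕ) (w : EuclideanSpace ℝ (Fin m)) (c : ℝ) :
    ⟪rrkIncl m w + c • EuclideanSpace.single (Fin.last m) (1:ℝ),
      EuclideanSpace.single (Fin.last m) (1:ℝ)⟫ = c := by
  rw [inner_add_left, rrkIncl_inner_single, real_inner_smul_left,
    EuclideanSpace.inner_single_right]
  simp [EuclideanSpace.single_apply]

noncomputable def rrkAug (m : ℕ) (f : ℝ → EuclideanSpace ℝ (Fin m) → EuclideanSpace ℝ (Fin m)) :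
    ℝ → EuclideanSpace ℝ (Fin (m+1)) → EuclideanSpace ℝ (Fin (m+1)) := fun t x =>
  rrkIncl m (f t (rrkProj m x)) +
    (2 * ⟪rrkProj m x, f t (rrkProj m x)⟫) • EuclideanSpace.single (Fin.last m) (1:ℝ)

lemma rrkAug_contDiff (m : ℕ) (f : ℝ → EuclideanSpace ℝ (Fin m) → EuclideanSpace ℝ (Fin m))
    (hf : ContDiff ℝ (⊤ : ℕ∞) (Function.uncurry f)) :
    ContDiff ℝ (⊤ : ℕ∞) (Function.uncurry (rrkAug m f)) := by
  have hφ : ContDiff ℝ (⊤ : ℕ∞) (fun q : ℝ × EuclideanSpace ℝ (Fin (m+1)) => f q.1 (rrkProj m q.2)) :=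
    hf.comp (contDiff_fst.prodMk ((rrkProj m).contDiff.comp contDiff_snd))
  have hP2 : ContDiff ℝ (⊤ : ℕ∞) (fun q : ℝ × EuclideanSpace ℝ (Fin (m+1)) => rrkProj m q.2) :=
    (rrkProj m).contDiff.comp contDiff_snd
  exact ((rrkIncl m).contDiff.comp hφ).add
    ((contDiff_const.mul (hP2.inner ℝ hφ)).smul contDiff_const)

/-- Local existence for a time-dependent smooth ODE. -/
lemma rrk_local_sol (m : ℕ) (f : ℝ → EuclideanSpace ℝ (Fin m) → EuclideanSpace ℝ (Fin m))
    (hf : ContDiff ℝ (⊤ : ℕ∞) (Function.uncurry f)) (t₀ : ℝ) (u₀ : EuclideanSpace ℝ (Fin m)) :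
    ∃ (u : ℝ → EuclideanSpace ℝ (Fin m)) (ε : ℝ), 0 < ε ∧ u t₀ = u₀ ∧
      ∀ t ∈ Set.Ioo (t₀ - ε) (t₀ + ε), HasDerivAt u (f t (u t)) t := by
  have hvc : ContDiff ℝ 1
      (fun q : ℝ × EuclideanSpace ℝ (Fin m) => ((1 : ℝ), Function.uncurry f q)) :=
    contDiff_const.prodMk (hf.of_le (by simp))
  obtain ⟨α, hα0, ε, hε, hα⟩ :=
    ContDiffAt.exists_forall_mem_closedBall_exists_eq_forall_mem_Ioo_hasDerivAt₀ (x₀ := ((t₀ : ℝ), u₀)) hvc.contDiffAt t₀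
  have ht₀mem : t₀ ∈ Set.Ioo (t₀ - ε) (t₀ + ε) := by constructor <;> linarith
  have h1 : ∀ t ∈ Set.Ioo (t₀ - ε) (t₀ + ε), HasDerivAt (fun t => (α t).1) 1 t := by
    intro t ht
    have := (ContinuousLinearMap.fst ℝ ℝ (EuclideanSpace ℝ (Fin m))).hasFDerivAt.comp_hasDerivAt
      t (hα t ht)
    exact this
  have hd : ∀ x ∈ Set.Ioo (t₀ - ε) (t₀ + ε), HasDerivAt (fun t => (α t).1 - t) 0 x := by
    intro x hx
    have := (h1 x hx).sub (hasDerivAt_id x)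
    rw [sub_self] at this
    exact this
  have hfst : ∀ t ∈ Set.Ioo (t₀ - ε) (t₀ + ε), (α t).1 = t := by
    intro t ht
    have hconst : (fun t => (α t).1 - t) t = (fun t => (α t).1 - t) t₀ := by
      refine (convex_Ioo _ _).is_const_of_fderivWithin_eq_zero
        (fun x hx => ((hd x hx).differentiableAt).differentiableWithinAt) ?_ ht ht₀mem
      intro x hx
      rw [fderivWithin_of_isOpen isOpen_Ioo hx]
      have h2 : HasFDerivAt (fun t => (α t).1 - t)
          (ContinuousLinearMap.smulRight (1 : ℝ →L[ℝ] ℝ) (0 : ℝ)) x := (hd x hx).hasFDerivAt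
      rw [h2.fderiv]
      ext y
      simp
    simp only [hα0] at hconst
    have : (α t).1 - t = t₀ - t₀ := hconst
    linarith [this]
  refine ⟨fun t => (α t).2, ε, hε, by simp only []; rw [hα0], ?_⟩
  intro t ht
  have h3 := (ContinuousLinearMap.snd ℝ ℝ (EuclideanSpace ℝ (Fin m))).hasFDerivAt.comp_hasDerivAt
    t (hα t ht)
  have h4 : (Prod.snd ∘ α) = fun t => (α t).2 := rfl
  have h5 : ((ContinuousLinearMap.snd ℝ ℝ (EuclideanSpace ℝ (Fin m))))
      ((1 : ℝ), Function.uncurry f (α t)) = f (α t).1 (α t).2 := rfl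
  rw [hfst t ht] at h5
  simpa [h4, h5] using h3

lemma rrk_stage_bound {s m : ℕ} (A : Fin s → Fin s → ℝ)
    (hA : ∀ i j : Fin s, (i : ℕ) ≤ (j : ℕ) → A i j = 0)
    (f : ℝ → EuclideanSpace ℝ (Fin m) → EuclideanSpace ℝ (Fin m))
    (hf : Continuous (Function.uncurry f))
    (t₀ : ℝ) (u₀ : EuclideanSpace ℝ (Fin m))
    (F : ℝ → Fin s → EuclideanSpace ℝ (Fin m))
    (hF : ∀ dt i, F dt i =
      f (t₀ + (∑ j, A i j) * dt) (u₀ + dt • ∑ j, A i j • F dt j)) :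
    ∃ C δ : ℝ, 0 < C ∧ 0 < δ ∧ ∀ dt ∈ Set.Ioo (0:ℝ) δ, ∀ i, ‖F dt i‖ ≤ C := by
  classical
  set Ka : ℝ := 1 + ∑ i, ∑ j, |A i j| with hKa_def
  have hKa1 : (1:ℝ) ≤ Ka := by
    have : (0:ℝ) ≤ ∑ i, ∑ j, |A i j| :=
      Finset.sum_nonneg fun i _ => Finset.sum_nonneg fun j _ => abs_nonneg _
    simp [hKa_def]; linarith
  have hKarow : ∀ i : Fin s, ∑ j, |A i j| ≤ Ka := by
    intro i
    have h1 : ∑ j, |A i j| ≤ ∑ i, ∑ j, |A i j| :=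
      Finset.single_le_sum (f := fun i => ∑ j, |A i j|)
        (fun i _ => Finset.sum_nonneg fun j _ => abs_nonneg _) (Finset.mem_univ i)
    linarith
  obtain ⟨C0, hC0⟩ := (isCompact_Icc.prod (isCompact_closedBall u₀ 1)).exists_bound_of_continuousOn
    (s := Set.Icc (t₀ - 1) (t₀ + 1) ×ˢ Metric.closedBall u₀ 1) hf.continuousOn
  set C : ℝ := |C0| + 1 with hC_def
  have hC1 : (1:ℝ) ≤ C := by rw [hC_def]; linarith [abs_nonneg C0]
  have hCpos : (0:ℝ) < C := by linarith
  have hKapos : (0:ℝ) < Ka := by linarith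
  refine ⟨C, (Ka * C)⁻¹, hCpos, by positivity, ?_⟩
  intro dt hdt
  have hdtpos : 0 < dt := hdt.1
  have hdtK : dt * (Ka * C) ≤ 1 := by
    have h1 : dt * (Ka * C) < (Ka * C)⁻¹ * (Ka * C) :=
      mul_lt_mul_of_pos_right hdt.2 (mul_pos hKapos hCpos)
    rw [inv_mul_cancel₀ (by positivity : (Ka * C) ≠ 0)] at h1
    exact h1.le
  have key : ∀ n : ℕ, ∀ i : Fin s, (i:ℕ) < n → ‖F dt i‖ ≤ C := by
    intro n
    induction n with
    | zero => intro i hi; omega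
    | succ n ih =>
      intro i hi
      rcases Nat.lt_or_ge (i:ℕ) n with h | h
      · exact ih i h
      · have hin : (i:ℕ) = n := by omega
        -- bound each stage term
        have hterm : ∀ j : Fin s, ‖A i j • F dt j‖ ≤ |A i j| * C := by
          intro j
          rcases Nat.lt_or_ge (j:ℕ) n with hj | hj
          · rw [norm_smul, Real.norm_eq_abs]
            exact mul_le_mul_of_nonneg_left (ih j hj) (abs_nonneg _)
          · have h0 : A i j = 0 := hA i j (by omega)
            rw [h0, zero_smul, norm_zero, abs_zero, zero_mul]
        have hsum : ‖∑ j, A i j • F dt j‖ ≤ Ka * C := by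
          calc ‖∑ j, A i j • F dt j‖ ≤ ∑ j, ‖A i j • F dt j‖ := norm_sum_le _ _
            _ ≤ ∑ j, |A i j| * C := Finset.sum_le_sum fun j _ => hterm j
            _ = (∑ j, |A i j|) * C := by rw [Finset.sum_mul]
            _ ≤ Ka * C := mul_le_mul_of_nonneg_right (hKarow i) (le_of_lt hCpos)
        have hymem : u₀ + dt • ∑ j, A i j • F dt j ∈ Metric.closedBall u₀ 1 := by
          rw [Metric.mem_closedBall, dist_eq_norm]
          have : ‖u₀ + dt • ∑ j, A i j • F dt j - u₀‖ = dt * ‖∑ j, A i j • F dt j‖ := by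
            rw [add_sub_cancel_left, norm_smul, Real.norm_eq_abs, abs_of_pos hdtpos]
          rw [this]
          calc dt * ‖∑ j, A i j • F dt j‖ ≤ dt * (Ka * C) :=
                mul_le_mul_of_nonneg_left hsum (le_of_lt hdtpos)
            _ ≤ 1 := hdtK
        have htmem : t₀ + (∑ j, A i j) * dt ∈ Set.Icc (t₀ - 1) (t₀ + 1) := by
          have habs : |(∑ j, A i j) * dt| ≤ 1 := by
            rw [abs_mul, abs_of_pos hdtpos]
            have h1 : |∑ j, A i j| ≤ Ka := le_trans (Finset.abs_sum_le_sum_abs _ _) (hKarow i)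
            have h2 : |∑ j, A i j| * dt ≤ Ka * dt :=
              mul_le_mul_of_nonneg_right h1 (le_of_lt hdtpos)
            have h3 : Ka * dt ≤ Ka * dt * C := le_mul_of_one_le_right (by positivity) hC1
            nlinarith
          rw [abs_le] at habs
          constructor <;> [linarith [habs.1]; linarith [habs.2]]
        have := hC0 _ (Set.mk_mem_prod htmem hymem)
        rw [hF dt i]
        calc ‖f (t₀ + (∑ j, A i j) * dt) (u₀ + dt • ∑ j, A i j • F dt j)‖ ≤ C0 := this
          _ ≤ C := by rw [hC_def]; cases abs_cases C0 <;> linarith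
  exact fun i => key s i i.isLt

set_option maxHeartbeats 1000000 in
theorem rrk_delta_estimate'
    {s m p : ℕ} (A : Fin s → Fin s → ℝ) (b : Fin s → ℝ)
    (hA : ∀ i j : Fin s, (i : ℕ) ≤ (j : ℕ) → A i j = 0)
    (hp : 2 ≤ p)
    (horder : ∀ (m : ℕ) (f : ℝ → EuclideanSpace ℝ (Fin m) → EuclideanSpace ℝ (Fin m)),
    ContDiff ℝ (⊤ : ℕ∞) (Function.uncurry f) →
    ∀ (t₀ : ℝ) (u₀ : EuclideanSpace ℝ (Fin m)) (F : ℝ → Fin s → EuclideanSpace ℝ (Fin m)),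
      (∀ dt i, F dt i =
        f (t₀ + (∑ j, A i j) * dt) (u₀ + dt • ∑ j, A i j • F dt j)) →
      ∀ (u : ℝ → EuclideanSpace ℝ (Fin m)) (ε : ℝ), 0 < ε →
        (∀ t ∈ Set.Ioo (t₀ - ε) (t₀ + ε), HasDerivAt u (f t (u t)) t) →
        u t₀ = u₀ →
        ∃ C δ : ℝ, 0 < C ∧ 0 < δ ∧
          ∀ dt ∈ Set.Ioo (0 : ℝ) δ,
            ‖u₀ + dt • ∑ j, b j • F dt j - u (t₀ + dt)‖ ≤ C * dt ^ (p + 1))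
    (f : ℝ → EuclideanSpace ℝ (Fin m) → EuclideanSpace ℝ (Fin m))
    (hf : ContDiff ℝ (⊤ : ℕ∞) (Function.uncurry f))
    (t₀ : ℝ) (u₀ : EuclideanSpace ℝ (Fin m))
    (F : ℝ → Fin s → EuclideanSpace ℝ (Fin m))
    (hF : ∀ dt i, F dt i =
      f (t₀ + (∑ j, A i j) * dt) (u₀ + dt • ∑ j, A i j • F dt j)) :
    ∃ C δ₀ : ℝ, 0 < C ∧ 0 < δ₀ ∧
      ∀ dt ∈ Set.Ioo (0 : ℝ) δ₀,
        |∑ i, b i * ∑ j, (b j - 2 * A i j) * ⟪F dt i, F dt j⟫| ≤ C * dt ^ (p - 1) := by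
  classical
  obtain ⟨u, ε, hε, hu0, hu⟩ := rrk_local_sol m f hf t₀ u₀
  obtain ⟨Cf, δF, hCf, hδF, hFbd⟩ :=
    rrk_stage_bound A hA f hf.continuous t₀ u₀ F hF
  set e : EuclideanSpace ℝ (Fin (m+1)) := EuclideanSpace.single (Fin.last m) (1:ℝ) with he_def
  set g : ℝ → EuclideanSpace ℝ (Fin (m+1)) → EuclideanSpace ℝ (Fin (m+1)) := rrkAug m f
    with hg_def
  have hg := rrkAug_contDiff m f hf
  set G : ℝ → Fin s → EuclideanSpace ℝ (Fin (m+1)) := fun dt i =>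
    rrkIncl m (F dt i) + (2 * ⟪u₀ + dt • ∑ j, A i j • F dt j, F dt i⟫) • e with hG_def
  set U₀ : EuclideanSpace ℝ (Fin (m+1)) := rrkIncl m u₀ + (⟪u₀, u₀⟫ : ℝ) • e with hU₀_def
  set U : ℝ → EuclideanSpace ℝ (Fin (m+1)) := fun t =>
    rrkIncl m (u t) + (⟪u t, u t⟫ : ℝ) • e with hU_def
  have hPe : rrkProj m e = 0 := rrkProj_single m 1
  have hPG : ∀ (dt : ℝ) (c : Fin s → ℝ), rrkProj m (U₀ + dt • ∑ j, c j • G dt j)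
      = u₀ + dt • ∑ j, c j • F dt j := by
    intro dt c
    simp [hU₀_def, hG_def, map_add, map_smul, map_sum, rrkProj_incl, hPe]
  have hGstage : ∀ dt i, G dt i =
      g (t₀ + (∑ j, A i j) * dt) (U₀ + dt • ∑ j, A i j • G dt j) := by
    intro dt i
    rw [hg_def]
    show _ = rrkAug m f _ _
    rw [rrkAug, hPG dt (A i), ← hF dt i]
  have hU0 : U t₀ = U₀ := by rw [hU_def, hU₀_def]; simp only []; rw [hu0]
  have hUd : ∀ t ∈ Set.Ioo (t₀ - ε) (t₀ + ε), HasDerivAt U (g t (U t)) t := by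
    intro t ht
    have h1 : HasDerivAt (fun t => rrkIncl m (u t)) (rrkIncl m (f t (u t))) t :=
      (rrkIncl m).hasFDerivAt.comp_hasDerivAt t (hu t ht)
    have h2 : HasDerivAt (fun t => (⟪u t, u t⟫ : ℝ))
        (⟪u t, f t (u t)⟫ + ⟪f t (u t), u t⟫) t :=
      HasDerivAt.inner ℝ (hu t ht) (hu t ht)
    have h3 := h1.add (h2.smul_const e)
    have h4 : rrkProj m (U t) = u t := by
      simp [hU_def, map_add, map_smul, rrkProj_incl, hPe]
    have h5 : g t (U t) = rrkIncl m (f t (u t)) +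
        ((⟪u t, f t (u t)⟫ + ⟪f t (u t), u t⟫ : ℝ)) • e := by
      rw [hg_def]
      show rrkAug m f _ _ = _
      rw [rrkAug, h4]
      congr 2
      rw [two_mul, real_inner_comm (f t (u t)) (u t)]
    rw [h5]
    exact h3
  obtain ⟨C₁, δ₁, hC₁, hδ₁, h1⟩ := horder m f hf t₀ u₀ F hF u ε hε hu hu0
  obtain ⟨C₂, δ₂, hC₂, hδ₂, h2⟩ := horder (m+1) g hg t₀ U₀ G hGstage U ε hε hUd hU0
  -- continuity of u at t₀
  have hcont : ContinuousAt u t₀ :=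
    (hu t₀ ⟨by linarith, by linarith⟩).continuousAt
  obtain ⟨δu, hδu, hball⟩ := Metric.continuousAt_iff.mp hcont 1 one_pos
  set Kb : ℝ := 1 + ∑ j, |b j| with hKb_def
  have hKb1 : (1:ℝ) ≤ Kb := by
    have : (0:ℝ) ≤ ∑ j, |b j| := Finset.sum_nonneg fun j _ => abs_nonneg _
    rw [hKb_def]; linarith
  have hKbpos : (0:ℝ) < Kb := by linarith
  set δb : ℝ := (Kb * Cf)⁻¹ with hδb_def
  have hδbpos : (0:ℝ) < δb := by rw [hδb_def]; positivity
  refine ⟨C₁ * (2 * ‖u₀‖ + 2) + C₂, min (min δF δ₁) (min δ₂ (min δu δb)), ?_, ?_, ?_⟩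
  · have h0 : (0:ℝ) < 2 * ‖u₀‖ + 2 := by positivity
    positivity
  · simp only [lt_min_iff]
    exact ⟨⟨hδF, hδ₁⟩, hδ₂, hδu, hδbpos⟩
  intro dt hdt
  simp only [Set.mem_Ioo, lt_min_iff] at hdt
  obtain ⟨hdtpos, ⟨hdtF, hdt1⟩, hdt2, hdtu, hdtb⟩ := hdt
  -- abbreviations
  set B : EuclideanSpace ℝ (Fin m) := ∑ j, b j • F dt j with hB_def
  set u1 : EuclideanSpace ℝ (Fin m) := u₀ + dt • B with hu1_def
  set v : EuclideanSpace ℝ (Fin m) := u (t₀ + dt) with hv_def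
  set U1 : EuclideanSpace ℝ (Fin (m+1)) := U₀ + dt • ∑ j, b j • G dt j with hU1_def
  -- norm bounds
  have hFb : ∀ i, ‖F dt i‖ ≤ Cf := hFbd dt ⟨hdtpos, hdtF⟩
  have hBnorm : ‖B‖ ≤ Kb * Cf := by
    rw [hB_def]
    calc ‖∑ j, b j • F dt j‖ ≤ ∑ j, ‖b j • F dt j‖ := norm_sum_le _ _
      _ ≤ ∑ j, |b j| * Cf := Finset.sum_le_sum fun j _ => by
          rw [norm_smul, Real.norm_eq_abs]
          exact mul_le_mul_of_nonneg_left (hFb j) (abs_nonneg _)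
      _ = (∑ j, |b j|) * Cf := by rw [Finset.sum_mul]
      _ ≤ Kb * Cf := mul_le_mul_of_nonneg_right (by rw [hKb_def]; linarith) hCf.le
  have hdtB : ‖dt • B‖ ≤ 1 := by
    rw [norm_smul, Real.norm_eq_abs, abs_of_pos hdtpos]
    have h1 : dt * ‖B‖ ≤ dt * (Kb * Cf) := mul_le_mul_of_nonneg_left hBnorm hdtpos.le
    have h2 : dt * (Kb * Cf) < δb * (Kb * Cf) :=
      mul_lt_mul_of_pos_right hdtb (by positivity)
    rw [hδb_def, inv_mul_cancel₀ (by positivity : (Kb * Cf) ≠ 0)] at h2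
    linarith
  have hu1norm : ‖u1‖ ≤ ‖u₀‖ + 1 := by
    rw [hu1_def]
    calc ‖u₀ + dt • B‖ ≤ ‖u₀‖ + ‖dt • B‖ := norm_add_le _ _
      _ ≤ ‖u₀‖ + 1 := by linarith
  have hvnorm : ‖v‖ ≤ ‖u₀‖ + 1 := by
    have hd : dist (t₀ + dt) t₀ < δu := by
      rw [Real.dist_eq, add_sub_cancel_left, abs_of_pos hdtpos]; exact hdtu
    have := hball hd
    rw [hu0, dist_eq_norm] at this
    calc ‖v‖ = ‖u₀ + (v - u₀)‖ := by rw [add_sub_cancel]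
      _ ≤ ‖u₀‖ + ‖v - u₀‖ := norm_add_le _ _
      _ ≤ ‖u₀‖ + 1 := by
          rw [hv_def]
          linarith [this]
  have e1 : ‖u1 - v‖ ≤ C₁ * dt ^ (p+1) := h1 dt ⟨hdtpos, hdt1⟩
  have e2 : ‖U1 - U (t₀ + dt)‖ ≤ C₂ * dt ^ (p+1) := h2 dt ⟨hdtpos, hdt2⟩
  -- inner products with e
  have hee : (⟪e, e⟫ : ℝ) = 1 := by
    rw [he_def, EuclideanSpace.inner_single_right]
    simp [EuclideanSpace.single_apply]
  have hUe : (⟪U (t₀ + dt), e⟫ : ℝ) = ⟪v, v⟫ := by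
    rw [hU_def, he_def]
    exact rrk_inner_e m (u (t₀ + dt)) _
  have hU1e : (⟪U1, e⟫ : ℝ) = ⟪u₀, u₀⟫ +
      dt * ∑ j, b j * (2 * ⟪u₀ + dt • ∑ k, A j k • F dt k, F dt j⟫) := by
    rw [hU1_def, hU₀_def, hG_def]
    rw [he_def]
    simp only [inner_add_left, real_inner_smul_left, sum_inner, rrkIncl_inner_single]
    rw [← he_def, hee]
    simp [Finset.mul_sum, mul_comm, mul_assoc]
  -- algebraic expansion
  have hb1 : (⟪u₀, B⟫ : ℝ) = ∑ j, b j * ⟪u₀, F dt j⟫ := by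
    rw [hB_def, inner_sum]
    exact Finset.sum_congr rfl fun j _ => by rw [real_inner_smul_right]
  have hb2 : (⟪B, B⟫ : ℝ) = ∑ i, ∑ j, b i * (b j * ⟪F dt i, F dt j⟫) := by
    rw [hB_def, sum_inner]
    refine Finset.sum_congr rfl fun i _ => ?_
    rw [real_inner_smul_left, inner_sum, Finset.mul_sum]
    exact Finset.sum_congr rfl fun j _ => by rw [real_inner_smul_right]
  have h_u1 : (⟪u1, u1⟫ : ℝ) = ⟪u₀, u₀⟫ + 2 * dt * (∑ j, b j * ⟪u₀, F dt j⟫)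
      + dt^2 * (∑ i, ∑ j, b i * (b j * ⟪F dt i, F dt j⟫)) := by
    rw [hu1_def, real_inner_add_add_self, real_inner_smul_right, real_inner_smul_left,
      real_inner_smul_right, hb1, hb2]
    ring
  have h_inner_y : ∀ j, (⟪u₀ + dt • ∑ k, A j k • F dt k, F dt j⟫ : ℝ)
      = ⟪u₀, F dt j⟫ + dt * ∑ k, A j k * ⟪F dt k, F dt j⟫ := by
    intro j
    rw [inner_add_left, real_inner_smul_left, sum_inner]
    congr 1
    congr 1
    exact Finset.sum_congr rfl fun k _ => by rw [real_inner_smul_left]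
  have h_w : ∑ j, b j * (2 * (⟪u₀, F dt j⟫ + dt * ∑ k, A j k * ⟪F dt k, F dt j⟫))
      = 2 * (∑ j, b j * ⟪u₀, F dt j⟫)
        + 2 * dt * (∑ j, b j * ∑ k, A j k * ⟪F dt k, F dt j⟫) := by
    have hterm : (∑ j, b j * (2 * ((⟪u₀, F dt j⟫:ℝ) + dt * ∑ k, A j k * ⟪F dt k, F dt j⟫)))
        = ∑ j, (2 * (b j * ⟪u₀, F dt j⟫)
          + 2 * dt * (b j * ∑ k, A j k * ⟪F dt k, F dt j⟫)) :=
      Finset.sum_congr rfl fun j _ => by ring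
    rw [hterm, Finset.sum_add_distrib, ← Finset.mul_sum, ← Finset.mul_sum]
  have h_sym : (∑ j, b j * ∑ k, A j k * (⟪F dt k, F dt j⟫:ℝ))
      = ∑ i, b i * ∑ j, A i j * ⟪F dt i, F dt j⟫ := by
    refine Finset.sum_congr rfl fun j _ => ?_
    congr 1
    exact Finset.sum_congr rfl fun k _ => by rw [real_inner_comm]
  have h_target : (∑ i, b i * ∑ j, (b j - 2 * A i j) * (⟪F dt i, F dt j⟫:ℝ))
      = (∑ i, ∑ j, b i * (b j * ⟪F dt i, F dt j⟫))
        - 2 * (∑ i, b i * ∑ j, A i j * ⟪F dt i, F dt j⟫) := by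
    have hterm : (∑ i, b i * ∑ j, (b j - 2 * A i j) * (⟪F dt i, F dt j⟫:ℝ))
        = ∑ i, ((∑ j, b i * (b j * ⟪F dt i, F dt j⟫))
          - 2 * (b i * ∑ j, A i j * ⟪F dt i, F dt j⟫)) := by
      refine Finset.sum_congr rfl fun i _ => ?_
      rw [Finset.mul_sum, Finset.mul_sum, Finset.mul_sum, ← Finset.sum_sub_distrib]
      exact Finset.sum_congr rfl fun j _ => by ring
    rw [hterm, Finset.sum_sub_distrib, ← Finset.mul_sum]
  -- the key identity
  have hinner_sum : (∑ j, b j * (2 * (⟪u₀ + dt • ∑ k, A j k • F dt k, F dt j⟫:ℝ)))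
      = ∑ j, b j * (2 * ((⟪u₀, F dt j⟫:ℝ) + dt * ∑ k, A j k * ⟪F dt k, F dt j⟫)) :=
    Finset.sum_congr rfl fun j _ => by rw [h_inner_y j]
  have hkey : (⟪u1, u1⟫ : ℝ) - ⟪U1, e⟫
      = dt^2 * (∑ i, b i * ∑ j, (b j - 2 * A i j) * ⟪F dt i, F dt j⟫) := by
    rw [hU1e, h_u1, h_target, hinner_sum, h_w, h_sym]
    ring
  -- estimates
  have habs1 : |(⟪u1, u1⟫ : ℝ) - ⟪v, v⟫| ≤ C₁ * dt^(p+1) * (2 * ‖u₀‖ + 2) := by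
    have hid : (⟪u1, u1⟫ : ℝ) - ⟪v, v⟫ = ⟪u1 - v, u1⟫ + ⟪v, u1 - v⟫ := by
      rw [inner_sub_left, inner_sub_right]
      ring
    rw [hid]
    calc |(⟪u1 - v, u1⟫ : ℝ) + ⟪v, u1 - v⟫| ≤ |(⟪u1 - v, u1⟫ : ℝ)| + |(⟪v, u1 - v⟫ : ℝ)| :=
          abs_add_le _ _
      _ ≤ ‖u1 - v‖ * ‖u1‖ + ‖v‖ * ‖u1 - v‖ :=
          add_le_add (abs_real_inner_le_norm _ _) (abs_real_inner_le_norm _ _)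
      _ ≤ C₁ * dt^(p+1) * (‖u₀‖ + 1) + (‖u₀‖ + 1) * (C₁ * dt^(p+1)) := by
          have hn : (0:ℝ) ≤ ‖u1 - v‖ := norm_nonneg _
          have h01 : (0:ℝ) ≤ ‖u₀‖ + 1 := by positivity
          exact add_le_add
            (mul_le_mul e1 hu1norm (norm_nonneg _) (by positivity))
            (mul_le_mul hvnorm e1 hn h01)
      _ = C₁ * dt^(p+1) * (2 * ‖u₀‖ + 2) := by ring
  have habs2 : |(⟪U1, e⟫ : ℝ) - ⟪v, v⟫| ≤ C₂ * dt^(p+1) := by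
    have hid : (⟪U1, e⟫ : ℝ) - ⟪v, v⟫ = ⟪U1 - U (t₀ + dt), e⟫ := by
      rw [inner_sub_left, hUe]
    rw [hid]
    have hnorme : ‖e‖ = 1 := by rw [he_def]; simp
    calc |(⟪U1 - U (t₀ + dt), e⟫ : ℝ)| ≤ ‖U1 - U (t₀ + dt)‖ * ‖e‖ :=
        abs_real_inner_le_norm _ _
      _ = ‖U1 - U (t₀ + dt)‖ := by rw [hnorme, mul_one]
      _ ≤ C₂ * dt^(p+1) := e2
  -- combine
  have hmain : dt^2 * |∑ i, b i * ∑ j, (b j - 2 * A i j) * (⟪F dt i, F dt j⟫:ℝ)|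
      ≤ (C₁ * (2 * ‖u₀‖ + 2) + C₂) * dt^(p+1) := by
    have h3 : |dt^2 * (∑ i, b i * ∑ j, (b j - 2 * A i j) * (⟪F dt i, F dt j⟫:ℝ))|
        ≤ C₁ * dt^(p+1) * (2 * ‖u₀‖ + 2) + C₂ * dt^(p+1) := by
      rw [← hkey]
      calc |(⟪u1, u1⟫ : ℝ) - ⟪U1, e⟫|
          ≤ |(⟪u1, u1⟫ : ℝ) - ⟪v, v⟫| + |(⟪v, v⟫ : ℝ) - ⟪U1, e⟫| := abs_sub_le _ _ _
        _ = |(⟪u1, u1⟫ : ℝ) - ⟪v, v⟫| + |(⟪U1, e⟫ : ℝ) - ⟪v, v⟫| := by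
            rw [abs_sub_comm ((⟪v, v⟫:ℝ)) ((⟪U1, e⟫:ℝ))]
        _ ≤ C₁ * dt^(p+1) * (2 * ‖u₀‖ + 2) + C₂ * dt^(p+1) :=
            add_le_add habs1 habs2
    rw [abs_mul, abs_of_pos (by positivity : (0:ℝ) < dt^2)] at h3
    linarith [h3]
  have hpow : dt^(p+1) = dt^(p-1) * dt^2 := by
    rw [← pow_add]
    congr 1
    omega
  rw [hpow] at hmain
  have h4 : (0:ℝ) < dt^2 := by positivity
  refine (mul_le_mul_iff_of_pos_right h4).mp ?_
  calc |∑ i, b i * ∑ j, (b j - 2 * A i j) * (⟪F dt i, F dt j⟫:ℝ)| * dt^2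
      = dt^2 * |∑ i, b i * ∑ j, (b j - 2 * A i j) * (⟪F dt i, F dt j⟫:ℝ)| := by ring
    _ ≤ (C₁ * (2 * ‖u₀‖ + 2) + C₂) * (dt^(p-1) * dt^2) := hmain
    _ = (C₁ * (2 * ‖u₀‖ + 2) + C₂) * dt^(p-1) * dt^2 := by ring

/-- key estimate in the proof of Lemma 2.5.  Let `(A, b)` be an
explicit `s`-stage Runge–Kutta method of order `p ≥ 2` and let `f` be `C^∞`.  Then the
quantity `δ(dt) := ∑ᵢ bᵢ ∑ⱼ (bⱼ − 2aᵢⱼ) ⟪fᵢ, fⱼ⟫` satisfies `δ(dt) = O(dt^(p−1))` as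
`dt → 0⁺`: there exist `C, δ₀ > 0` with `|δ(dt)| ≤ C dt^(p−1)` for all
`dt ∈ (0, δ₀)`. -/
theorem rrk_delta_estimate
    {s m p : ℕ} (A : Fin s → Fin s → ℝ) (b : Fin s → ℝ)
    (hA : ∀ i j : Fin s, (i : ℕ) ≤ (j : ℕ) → A i j = 0)
    (hp : 2 ≤ p)
    (horder : RKHasOrder A b p)
    (f : ℝ → EuclideanSpace ℝ (Fin m) → EuclideanSpace ℝ (Fin m))
    (hf : ContDiff ℝ (⊤ : ℕ∞) (Function.uncurry f))
    (t₀ : ℝ) (u₀ : EuclideanSpace ℝ (Fin m))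
    (F : ℝ → Fin s → EuclideanSpace ℝ (Fin m))
    (hF : ∀ dt i, F dt i =
      f (t₀ + (∑ j, A i j) * dt) (u₀ + dt • ∑ j, A i j • F dt j)) :
    ∃ C δ₀ : ℝ, 0 < C ∧ 0 < δ₀ ∧
      ∀ dt ∈ Set.Ioo (0 : ℝ) δ₀,
        |∑ i, b i * ∑ j, (b j - 2 * A i j) * ⟪F dt i, F dt j⟫| ≤ C * dt ^ (p - 1) :=
  rrk_delta_estimate' A b hA hp horder f hf t₀ u₀ F hF
end

section
/- (Order-p approximation of the energy evolution.) Let (A, b) be an explicit s-stage Runge–Kutta method of order p ≥ 2 (in the sense that for every C^∞ right-hand side the one-step local error is O(Δt^{p+1})), let f be C^∞, and let u be the exact solution of the IVP on a neighborhood of t₀. Then the stage term 2Δt Σⱼ bⱼ ⟨yⱼ, fⱼ⟩ approximates the change of the squared Euclidean norm over one step to order p: ‖u(t₀ + Δt)‖² − ‖u₀‖² = 2Δt Σ_{j=1}^s bⱼ ⟨yⱼ, fⱼ⟩ + O(Δt^{p+1}) as Δt → 0⁺. -/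
open scoped RealInnerProductSpace
open Classical

noncomputable def projE (m : ℕ) : EuclideanSpace ℝ (Fin (m+1)) →L[ℝ] EuclideanSpace ℝ (Fin m) :=
  LinearMap.toContinuousLinearMap
    { toFun := fun v => WithLp.toLp 2 (fun i : Fin m => v i.castSucc)
      map_add' := fun _ _ => rfl
      map_smul' := fun _ _ => rfl }

@[simp] lemma projE_apply (m : ℕ) (v : EuclideanSpace ℝ (Fin (m+1))) (i : Fin m) :
    projE m v i = v i.castSucc := rfl

noncomputable def augCLM (m : ℕ) : (EuclideanSpace ℝ (Fin m) × ℝ) →L[ℝ] EuclideanSpace ℝ (Fin (m+1)) :=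
  LinearMap.toContinuousLinearMap
    { toFun := fun p => WithLp.toLp 2 (Fin.snoc p.1 p.2 : Fin (m+1) → ℝ)
      map_add' := by
        intro x y
        ext i
        refine Fin.lastCases ?_ ?_ i <;> simp [Fin.snoc_last, Fin.snoc_castSucc,
          PiLp.add_apply]
      map_smul' := by
        intro c x
        ext i
        refine Fin.lastCases ?_ ?_ i <;> simp [Fin.snoc_last, Fin.snoc_castSucc,
          PiLp.smul_apply, smul_eq_mul] }

noncomputable def augE (m : ℕ) (x : EuclideanSpace ℝ (Fin m)) (r : ℝ) :
    EuclideanSpace ℝ (Fin (m+1)) := augCLM m (x, r)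

@[simp] lemma projE_augE (m : ℕ) (x : EuclideanSpace ℝ (Fin m)) (r : ℝ) :
    projE m (augE m x r) = x := by
  ext i
  simp [augE, augCLM, LinearMap.coe_toContinuousLinearMap', projE]
  exact Fin.snoc_castSucc (α := fun _ => ℝ) _ _ _

@[simp] lemma augE_last (m : ℕ) (x : EuclideanSpace ℝ (Fin m)) (r : ℝ) :
    augE m x r (Fin.last m) = r := by
  simp [augE, augCLM, LinearMap.coe_toContinuousLinearMap']

lemma coord_le_norm {n : ℕ} (v : EuclideanSpace ℝ (Fin n)) (i : Fin n) :
    |v i| ≤ ‖v‖ := by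
  rw [EuclideanSpace.norm_eq]
  have h1 : |v i| = Real.sqrt (‖v i‖ ^ 2) := by
    rw [Real.sqrt_sq_eq_abs]; simp [Real.norm_eq_abs, abs_abs]
  rw [h1]
  apply Real.sqrt_le_sqrt
  exact Finset.single_le_sum (fun j _ => sq_nonneg ‖v j‖) (Finset.mem_univ i)

noncomputable def augF (m : ℕ) (f : ℝ → EuclideanSpace ℝ (Fin m) → EuclideanSpace ℝ (Fin m)) :
    ℝ → EuclideanSpace ℝ (Fin (m+1)) → EuclideanSpace ℝ (Fin (m+1)) :=
  fun t v => augE m (f t (projE m v)) (2 * ⟪projE m v, f t (projE m v)⟫)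

lemma augF_contDiff (m : ℕ) (f : ℝ → EuclideanSpace ℝ (Fin m) → EuclideanSpace ℝ (Fin m))
    (hf : ContDiff ℝ (⊤ : ℕ∞) (Function.uncurry f)) :
    ContDiff ℝ (⊤ : ℕ∞) (Function.uncurry (augF m f)) := by
  have hP : ContDiff ℝ (⊤ : ℕ∞) fun p : ℝ × EuclideanSpace ℝ (Fin (m+1)) => projE m p.2 :=
    (projE m).contDiff.comp contDiff_snd
  have h1 : ContDiff ℝ (⊤ : ℕ∞) fun p : ℝ × EuclideanSpace ℝ (Fin (m+1)) =>
      f p.1 (projE m p.2) := hf.comp (contDiff_fst.prodMk hP)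
  have h2 : ContDiff ℝ (⊤ : ℕ∞) fun p : ℝ × EuclideanSpace ℝ (Fin (m+1)) =>
      (2 : ℝ) * ⟪projE m p.2, f p.1 (projE m p.2)⟫ :=
    contDiff_const.mul (hP.inner ℝ h1)
  exact (augCLM m).contDiff.comp (h1.prodMk h2)

/-- order-`p` approximation of the energy evolution.  Let `(A, b)`
be an explicit `s`-stage Runge–Kutta method of order `p ≥ 2`, let `f` be `C^∞`, and let
`u` be the exact solution of the IVP on a neighborhood of `t₀`.  Then the stage term
`2 dt ∑ⱼ bⱼ ⟪yⱼ, fⱼ⟫` approximates the change of the squared Euclidean norm over one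
step to order `p`:
`‖u(t₀ + dt)‖² − ‖u₀‖² = 2 dt ∑ⱼ bⱼ ⟪yⱼ, fⱼ⟫ + O(dt^(p+1))` as `dt → 0⁺`, where
`yⱼ = u₀ + dt ∑ₖ aⱼₖ F dt k` are the stage values. -/
theorem rrk_energy_evolution_order
    {s m p : ℕ} (A : Fin s → Fin s → ℝ) (b : Fin s → ℝ)
    (hA : ∀ i j : Fin s, (i : ℕ) ≤ (j : ℕ) → A i j = 0)
    (hp : 2 ≤ p)
    (horder : RKHasOrder A b p)
    (f : ℝ → EuclideanSpace ℝ (Fin m) → EuclideanSpace ℝ (Fin m))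
    (hf : ContDiff ℝ (⊤ : ℕ∞) (Function.uncurry f))
    (t₀ : ℝ) (u₀ : EuclideanSpace ℝ (Fin m))
    (F : ℝ → Fin s → EuclideanSpace ℝ (Fin m))
    (hF : ∀ dt i, F dt i =
      f (t₀ + (∑ j, A i j) * dt) (u₀ + dt • ∑ j, A i j • F dt j))
    (u : ℝ → EuclideanSpace ℝ (Fin m)) (ε : ℝ) (hε : 0 < ε)
    (hu : ∀ t ∈ Set.Ioo (t₀ - ε) (t₀ + ε), HasDerivAt u (f t (u t)) t)
    (hu₀ : u t₀ = u₀) :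
    ∃ C δ : ℝ, 0 < C ∧ 0 < δ ∧
      ∀ dt ∈ Set.Ioo (0 : ℝ) δ,
        |‖u (t₀ + dt)‖ ^ 2 - ‖u₀‖ ^ 2
          - 2 * dt * ∑ j, b j * ⟪u₀ + dt • ∑ k, A j k • F dt k, F dt j⟫|
          ≤ C * dt ^ (p + 1) := by
  classical
  set g := augF m f with hg
  have hgC := augF_contDiff m f hf
  set Ft : ℝ → Fin s → EuclideanSpace ℝ (Fin (m+1)) := fun dt i =>
    augE m (F dt i) (2 * ⟪u₀ + dt • ∑ k, A i k • F dt k, F dt i⟫) with hFt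
  set v₀ : EuclideanSpace ℝ (Fin (m+1)) := augE m u₀ (‖u₀‖ ^ 2) with hv₀
  set w : ℝ → EuclideanSpace ℝ (Fin (m+1)) := fun t => augE m (u t) (‖u t‖ ^ 2) with hw
  have hproj : ∀ (dt : ℝ) (c : Fin s → ℝ),
      projE m (v₀ + dt • ∑ j, c j • Ft dt j) = u₀ + dt • ∑ j, c j • F dt j := by
    intro dt c
    rw [map_add, map_smul, map_sum]
    simp [hFt, hv₀]
  have hFt' : ∀ dt i, Ft dt i =
      g (t₀ + (∑ j, A i j) * dt) (v₀ + dt • ∑ j, A i j • Ft dt j) := by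
    intro dt i
    show _ = augF m f _ _
    unfold augF
    rw [hproj dt (A i), ← hF dt i]
  have hw' : ∀ t ∈ Set.Ioo (t₀ - ε) (t₀ + ε), HasDerivAt w (g t (w t)) t := by
    intro t ht
    have h1 := hu t ht
    have h3 : HasDerivAt (fun t => ⟪u t, u t⟫)
        (⟪u t, f t (u t)⟫ + ⟪f t (u t), u t⟫) t := h1.inner ℝ h1
    have h2 : HasDerivAt (fun t => ‖u t‖ ^ 2) (2 * ⟪u t, f t (u t)⟫) t := by
      have heq : (fun t => ⟪u t, u t⟫) = fun t => ‖u t‖ ^ 2 := by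
        funext t; exact real_inner_self_eq_norm_sq (u t)
      rw [heq] at h3
      convert h3 using 1
      rw [real_inner_comm (f t (u t)) (u t)]; ring
    have hpair : HasDerivAt (fun t => (u t, ‖u t‖ ^ 2))
        (f t (u t), 2 * ⟪u t, f t (u t)⟫) t := h1.prodMk h2
    have hcomp := ((augCLM m).hasFDerivAt).comp_hasDerivAt t hpair
    have : g t (w t) = augCLM m (f t (u t), 2 * ⟪u t, f t (u t)⟫) := by
      show augF m f t (augE m (u t) (‖u t‖ ^ 2)) = _
      unfold augF
      rw [projE_augE]
      rfl
    rw [this]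
    exact hcomp
  have hwt₀ : w t₀ = v₀ := by rw [hw, hv₀]; simp [hu₀]
  obtain ⟨C, δ, hC, hδ, hb⟩ :=
    horder (m + 1) g hgC t₀ v₀ Ft hFt' w ε hε hw' hwt₀
  refine ⟨C, δ, hC, hδ, ?_⟩
  intro dt hdt
  have hnorm := hb dt hdt
  set v : EuclideanSpace ℝ (Fin (m+1)) :=
    v₀ + dt • ∑ j, b j • Ft dt j - w (t₀ + dt) with hv
  have e1 : ∀ (x : EuclideanSpace ℝ (Fin m)) (r : ℝ),
      EuclideanSpace.proj (Fin.last m) (augE m x r) = r := by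
    intro x r; simp
  have hval : EuclideanSpace.proj (Fin.last m) v =
      ‖u₀‖ ^ 2 + dt * ∑ j, b j * (2 * ⟪u₀ + dt • ∑ k, A j k • F dt k, F dt j⟫)
        - ‖u (t₀ + dt)‖ ^ 2 := by
    rw [hv, map_sub, map_add, map_smul, map_sum]
    simp only [map_smul, smul_eq_mul]
    rw [hv₀, hw]
    simp only [hFt, e1]
  have hsum : ∑ j, b j * (2 * ⟪u₀ + dt • ∑ k, A j k • F dt k, F dt j⟫)
      = 2 * ∑ j, b j * ⟪u₀ + dt • ∑ k, A j k • F dt k, F dt j⟫ := by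
    rw [Finset.mul_sum]
    exact Finset.sum_congr rfl fun j _ => by ring
  have key : ‖u (t₀ + dt)‖ ^ 2 - ‖u₀‖ ^ 2
      - 2 * dt * ∑ j, b j * ⟪u₀ + dt • ∑ k, A j k • F dt k, F dt j⟫
      = -(EuclideanSpace.proj (Fin.last m) v) := by
    rw [hval, hsum]; ring
  rw [key, abs_neg]
  have hle : |EuclideanSpace.proj (Fin.last m) v| ≤ ‖v‖ := by
    have := coord_le_norm v (Fin.last m)
    simpa using this
  exact le_trans hle hnorm
end
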